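/- arXiv:1807.00218 — 8 statements merged into one kernel-verified Lean document; each statement's English description precedes it below -/
import Mathlib

section
/- If n, d ≥ 2 are integers and ψ is an AME(n,d) state, then the support of ψ with respect to the computational basis has at least d^⌊n/2⌋ elements. -/
open scoped BigOperators Classical

noncomputable section

namespace AMEPaper

/-- Combine a configuration on the complement of `B` with a configuration on `B`
into a full configuration on `Fin n`. -/
def combine {n d : ℕ} (B : Finset (Fin n)) (a : {i : Fin n // i ∉ B} → Fin d)
    (b : {i : Fin n // i ∈ B} → Fin d) : Fin n → Fin d :=
  fun i => if h : i ∈ B then b ⟨i, h⟩ else a ⟨i, h⟩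

/-- `ψ` is an absolutely maximally entangled state with `n` sites and local dimension `d`:
it is a unit vector and, for every set `B` of at most `n/2` sites, the reduced density
matrix on `B` equals `d ^ (-|B|)` times the identity. -/
def IsAME (n d : ℕ) (ψ : (Fin n → Fin d) → ℂ) : Prop :=
  (∑ s : Fin n → Fin d, ‖ψ s‖ ^ 2 = 1) ∧
  ∀ B : Finset (Fin n), B.card ≤ n / 2 →
    ∀ b b' : {i : Fin n // i ∈ B} → Fin d,
      (∑ a : {i : Fin n // i ∉ B} → Fin d,
          ψ (combine B a b) * (starRingEnd ℂ) (ψ (combine B a b'))) =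
        if b = b' then ((d : ℂ) ^ B.card)⁻¹ else 0

/-- `ψ` has minimal support: its support in the computational basis has exactly
`d ^ ⌊n/2⌋` elements. -/
def HasMinimalSupport (n d : ℕ) (ψ : (Fin n → Fin d) → ℂ) : Prop :=
  {s : Fin n → Fin d | ψ s ≠ 0}.ncard = d ^ (n / 2)

/-- `C` is an MDS code over the alphabet `Fin d` with wordlength `n` and minimum
Hamming distance `δ`: its minimum distance is exactly `δ` and it meets the Singleton
bound, `|C| = d ^ (n - δ + 1)`. -/
def IsMDSCode (d n δ : ℕ) (C : Finset (Fin n → Fin d)) : Prop :=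
  C.card = d ^ (n - δ + 1) ∧
  (∀ w ∈ C, ∀ w' ∈ C, w ≠ w' → δ ≤ hammingDist w w') ∧
  (∃ w ∈ C, ∃ w' ∈ C, w ≠ w' ∧ hammingDist w w' = δ)

/-- A latin `k`-hypercube of order `d`: fixing all indices but any one of them, the
resulting map `Fin d → Fin d` is a bijection. -/
def IsLatinHypercube (k d : ℕ) (L : (Fin k → Fin d) → Fin d) : Prop :=
  ∀ (i : Fin k) (x : Fin k → Fin d),
    Function.Bijective fun v : Fin d => L (Function.update x i v)

/-- Two latin `k`-hypercubes are orthogonal if for every pair of distinct indices and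
all ways of fixing the remaining indices, the two resulting latin squares are
orthogonal. -/
def AreOrthogonalHypercubes (k d : ℕ) (L M : (Fin k → Fin d) → Fin d) : Prop :=
  ∀ (i j : Fin k), i ≠ j → ∀ x : Fin k → Fin d,
    Function.Injective fun p : Fin d × Fin d =>
      (L (Function.update (Function.update x i p.1) j p.2),
       M (Function.update (Function.update x i p.1) j p.2))

/-- A latin square of order `d`: every row and every column is a bijection. -/
def IsLatinSquare (d : ℕ) (L : Fin d × Fin d → Fin d) : Prop :=
  (∀ i : Fin d, Function.Bijective fun j => L (i, j)) ∧
  (∀ j : Fin d, Function.Bijective fun i => L (i, j))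

/-- If `n, d ≥ 2` and `ψ` is an `AME(n,d)` state, then the support of `ψ` in the
computational basis has at least `d ^ ⌊n/2⌋` elements. -/
theorem support_lower_bound (n d : ℕ) (hn : 2 ≤ n) (hd : 2 ≤ d)
    (ψ : (Fin n → Fin d) → ℂ) (hψ : IsAME n d ψ) :
    d ^ (n / 2) ≤ {s : Fin n → Fin d | ψ s ≠ 0}.ncard := by
  classical
  -- choose a subset B of size n/2
  obtain ⟨B, -, hBcard⟩ := Finset.exists_subset_card_eq (s := (Finset.univ : Finset (Fin n)))
    (by simp [Nat.div_le_self n 2] : n / 2 ≤ Finset.univ.card)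
  have hB : B.card ≤ n / 2 := le_of_eq hBcard
  have hAME := hψ.2 B hB
  -- for each b there is a with ψ (combine B a b) ≠ 0
  have hex : ∀ b : {i : Fin n // i ∈ B} → Fin d,
      ∃ a : {i : Fin n // i ∉ B} → Fin d, ψ (combine B a b) ≠ 0 := by
    intro b
    by_contra h
    push_neg at h
    have := hAME b b
    simp only [if_pos rfl] at this
    rw [Finset.sum_eq_zero (fun a _ => by rw [h a]; ring)] at this
    have hd0 : ((d : ℂ) ^ B.card)⁻¹ ≠ 0 := by
      apply inv_ne_zero
      apply pow_ne_zero
      exact Nat.cast_ne_zero.mpr (by omega)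
    exact hd0 this.symm
  choose a ha using hex
  set S : Set (Fin n → Fin d) := {s : Fin n → Fin d | ψ s ≠ 0} with hS
  have hf : ∀ b, combine B (a b) b ∈ S := fun b => ha b
  have hinj : Function.Injective (fun b : {i : Fin n // i ∈ B} → Fin d =>
      (⟨combine B (a b) b, hf b⟩ : S)) := by
    intro b b' h
    have h' : combine B (a b) b = combine B (a b') b' := congrArg Subtype.val h
    funext i
    have := congrFun h' i.1
    simpa [combine, i.2] using this
  have hcard : Fintype.card ({i : Fin n // i ∈ B} → Fin d) ≤ Fintype.card S :=
    Fintype.card_le_of_injective _ hinj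
  have h1 : Fintype.card ({i : Fin n // i ∈ B} → Fin d) = d ^ (n / 2) := by
    rw [Fintype.card_fun]
    simp [hBcard]
  have h2 : S.ncard = Fintype.card S := by
    rw [Set.ncard_eq_toFinset_card']
    simp [Set.toFinset_card]
  rw [h2, ← h1]
  exact hcard

end AMEPaper
end
end

section
/- Let ψ be an AME(n,d) state of minimal support, so ψ(s) = e^{iθ(s)}·r(s) with r(s) ≥ 0 on its support. Then for any function θ' assigning real phases to configurations, the state φ defined by φ(s) = e^{iθ'(s)}·|ψ(s)| is also an AME(n,d) state of minimal support. -/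
open scoped BigOperators Classical

noncomputable section

namespace AMEPaper

/-! A minimally supported AME state has exactly one support configuration above every
configuration `b` of `⌊n/2⌋` sites: there is at least one because the diagonal entry
`ρ_B(b, b) = d^(-|B|)` is nonzero, and a counting argument gives at most one. Hence two
support configurations that agree outside a set of at most `n/2` sites coincide, so every
term of an off-diagonal entry `ρ_B(b, b')` vanishes individually. Both this and the diagonal
entries, which are sums of `|ψ|²`, only see the moduli `|ψ(s)|`; changing the phases
therefore preserves the AME property and the support. -/

section

variable {n d : ℕ}

lemma combine_of_mem (B : Finset (Fin n)) (a : {i : Fin n // i ∉ B} → Fin d)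
    (b : {i : Fin n // i ∈ B} → Fin d) {i : Fin n} (h : i ∈ B) :
    combine B a b i = b ⟨i, h⟩ := dif_pos h

lemma combine_of_not_mem (B : Finset (Fin n)) (a : {i : Fin n // i ∉ B} → Fin d)
    (b : {i : Fin n // i ∈ B} → Fin d) {i : Fin n} (h : i ∉ B) :
    combine B a b i = a ⟨i, h⟩ := dif_neg h

lemma combine_injective (B : Finset (Fin n)) (a : {i : Fin n // i ∉ B} → Fin d) :
    Function.Injective (combine B a) := fun b b' h => by
  funext i
  simpa only [combine_of_mem B a _ i.2] using congrFun h i.1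

end

namespace IsAME

variable {n d : ℕ} {ψ : (Fin n → Fin d) → ℂ}

lemma exists_combine_ne_zero (hψ : IsAME n d ψ) {B : Finset (Fin n)} (hB : B.card ≤ n / 2)
    (b : {i : Fin n // i ∈ B} → Fin d) : ∃ a, ψ (combine B a b) ≠ 0 := by
  -- `d ^ |B|` counts the configurations on `B`, of which `b` is one.
  have hpow : (d : ℂ) ^ B.card ≠ 0 := by
    have hcard : 0 < Fintype.card ({i : Fin n // i ∈ B} → Fin d) := Fintype.card_pos_iff.2 ⟨b⟩
    rw [Fintype.card_fun, Fintype.card_coe, Fintype.card_fin] at hcard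
    exact_mod_cast hcard.ne'
  have hdiag := hψ.2 B hB b b
  rw [if_pos rfl] at hdiag
  obtain ⟨a, -, ha⟩ := Finset.exists_ne_zero_of_sum_ne_zero (hdiag ▸ inv_ne_zero hpow)
  exact ⟨a, left_ne_zero_of_mul ha⟩

lemma injOn_restrict (hψ : IsAME n d ψ) (hmin : HasMinimalSupport n d ψ)
    {B : Finset (Fin n)} (hB : B.card = n / 2) :
    Set.InjOn (fun s (i : {i : Fin n // i ∈ B}) => s i) {s | ψ s ≠ 0} := by
  have hsupp : {s | ψ s ≠ 0} = ↑(Finset.univ.filter fun s => ψ s ≠ 0) := by simp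
  rw [hsupp]
  refine Finset.injOn_of_surjOn_of_card_le _ (fun _ _ => Finset.mem_coe.2 (Finset.mem_univ _))
    (fun b _ => ?_) ?_
  · obtain ⟨a, ha⟩ := hψ.exists_combine_ne_zero hB.le b
    exact ⟨combine B a b, by simpa using ha, funext fun i => combine_of_mem B a b i.2⟩
  · rw [HasMinimalSupport, hsupp, Set.ncard_coe_finset] at hmin
    simp [hmin, hB]

lemma eq_of_eqOn_compl (hψ : IsAME n d ψ) (hmin : HasMinimalSupport n d ψ)
    {B : Finset (Fin n)} (hB : B.card ≤ n / 2) {s t : Fin n → Fin d}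
    (hs : ψ s ≠ 0) (ht : ψ t ≠ 0) (hst : ∀ i ∉ B, s i = t i) : s = t := by
  have hcompl : n / 2 ≤ Bᶜ.card := by
    rw [Finset.card_compl, Fintype.card_fin]
    omega
  obtain ⟨B', hB'B, hB'⟩ := Finset.exists_subset_card_eq hcompl
  exact hψ.injOn_restrict hmin hB' hs ht
    (funext fun i => hst i (Finset.mem_compl.1 (hB'B i.2)))

lemma of_norm_eq (hψ : IsAME n d ψ) (hmin : HasMinimalSupport n d ψ)
    {φ : (Fin n → Fin d) → ℂ} (hφ : ∀ s, ‖φ s‖ = ‖ψ s‖) : IsAME n d φ := by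
  refine ⟨by simpa only [hφ] using hψ.1, fun B hB b b' => ?_⟩
  split_ifs with hbb
  · subst hbb
    have hdiag := hψ.2 B hB b b
    rw [if_pos rfl] at hdiag
    rw [← hdiag]
    simp only [Complex.mul_conj', hφ]
  · refine Finset.sum_eq_zero fun a _ => ?_
    by_contra hterm
    have hb : ψ (combine B a b) ≠ 0 := by
      rw [← norm_ne_zero_iff, ← hφ, norm_ne_zero_iff]
      exact left_ne_zero_of_mul hterm
    have hb' : ψ (combine B a b') ≠ 0 := by
      rw [← norm_ne_zero_iff, ← hφ, ← Complex.norm_conj, norm_ne_zero_iff]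
      exact right_ne_zero_of_mul hterm
    refine hbb (combine_injective B a (hψ.eq_of_eqOn_compl hmin hB hb hb' fun i hi => ?_))
    rw [combine_of_not_mem B a b hi, combine_of_not_mem B a b' hi]

end IsAME

lemma HasMinimalSupport.of_norm_eq {n d : ℕ} {ψ φ : (Fin n → Fin d) → ℂ}
    (hmin : HasMinimalSupport n d ψ) (hφ : ∀ s, ‖φ s‖ = ‖ψ s‖) : HasMinimalSupport n d φ := by
  have hsupp : {s | φ s ≠ 0} = {s | ψ s ≠ 0} :=
    Set.ext fun s => not_congr <| by rw [← norm_eq_zero, hφ, norm_eq_zero]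
  rw [HasMinimalSupport, hsupp]
  exact hmin

theorem phase_change_general (n d : ℕ)
    (ψ : (Fin n → Fin d) → ℂ) (hψ : IsAME n d ψ) (hmin : HasMinimalSupport n d ψ)
    (θ' : (Fin n → Fin d) → ℝ) (φ : (Fin n → Fin d) → ℂ)
    (hφ : ∀ s, φ s = Complex.exp (Complex.I * θ' s) * (‖ψ s‖ : ℂ)) :
    IsAME n d φ ∧ HasMinimalSupport n d φ := by
  have hnorm : ∀ s, ‖φ s‖ = ‖ψ s‖ := fun s => by
    rw [hφ s, norm_mul, mul_comm, Complex.norm_exp_I_mul_ofReal, Complex.norm_real,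
      Real.norm_of_nonneg (norm_nonneg _), mul_one]
  exact ⟨hψ.of_norm_eq hmin hnorm, hmin.of_norm_eq hnorm⟩

/-- Changing the phases of a minimally supported AME state yields again a minimally
supported AME state. -/
theorem phase_change (n d : ℕ) (hn : 2 ≤ n) (hd : 2 ≤ d)
    (ψ : (Fin n → Fin d) → ℂ) (hψ : IsAME n d ψ) (hmin : HasMinimalSupport n d ψ)
    (θ' : (Fin n → Fin d) → ℝ) (φ : (Fin n → Fin d) → ℂ)
    (hφ : ∀ s, φ s = Complex.exp (Complex.I * θ' s) * (‖ψ s‖ : ℂ)) :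
    IsAME n d φ ∧ HasMinimalSupport n d φ :=
  phase_change_general n d ψ hψ hmin θ' φ hφ

end AMEPaper
end
end

section
/- For every integer d ≥ 2 there exists an integer N ≥ 3 such that, for every integer n ≥ 2, an AME(n,d) state of minimal support exists if and only if n ≤ N. -/
open scoped BigOperators Classical

noncomputable section

namespace AMEPaper

/-- The key combinatorial code property equivalent to existence of a minimally
supported AME state. -/
def Good (n d : ℕ) : Prop :=
  ∃ C : Finset (Fin n → Fin d), C.card = d ^ (n / 2) ∧
    ∀ A : Finset (Fin n), A.card = n / 2 →
      ∀ w ∈ C, ∀ w' ∈ C, (∀ i ∈ A, w i = w' i) → w = w'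

lemma restrict_bij {n d k : ℕ} (C : Finset (Fin n → Fin d)) (hcard : C.card = d ^ k)
    (hinj : ∀ A : Finset (Fin n), A.card = k →
      ∀ w ∈ C, ∀ w' ∈ C, (∀ i ∈ A, w i = w' i) → w = w')
    (A : Finset (Fin n)) (hA : A.card = k) :
    Function.Bijective (fun (w : {x // x ∈ C}) (i : {i // i ∈ A}) => w.1 i.1) := by
  rw [Fintype.bijective_iff_injective_and_card]
  constructor
  · intro w w' h
    ext i
    exact hinj A hA w.1 w.2 w'.1 w'.2 (fun i hi => congrFun h ⟨i, hi⟩) ▸ rfl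
  · rw [Fintype.card_coe, hcard, Fintype.card_fun, Fintype.card_coe, Fintype.card_fin, hA]

lemma restrict_surj {n d k : ℕ} (C : Finset (Fin n → Fin d)) (hcard : C.card = d ^ k)
    (hinj : ∀ A : Finset (Fin n), A.card = k →
      ∀ w ∈ C, ∀ w' ∈ C, (∀ i ∈ A, w i = w' i) → w = w')
    (A : Finset (Fin n)) (hA : A.card = k) (g : Fin n → Fin d) :
    ∃ w ∈ C, ∀ i ∈ A, w i = g i := by
  obtain ⟨w, hw⟩ := (restrict_bij C hcard hinj A hA).2 (fun i => g i.1)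
  exact ⟨w.1, w.2, fun i hi => congrFun hw ⟨i, hi⟩⟩

lemma count_filter {n d k : ℕ} (C : Finset (Fin n → Fin d)) (hcard : C.card = d ^ k)
    (hinj : ∀ A : Finset (Fin n), A.card = k →
      ∀ w ∈ C, ∀ w' ∈ C, (∀ i ∈ A, w i = w' i) → w = w')
    (hk : k ≤ n) (B : Finset (Fin n)) (hB : B.card ≤ k) (b : Fin n → Fin d) :
    (C.filter (fun w => ∀ i ∈ B, w i = b i)).card = d ^ (k - B.card) := by
  obtain ⟨A, hBA, hA⟩ := Finset.exists_superset_card_eq hB (by simp [hk])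
  set T := C.filter (fun w => ∀ i ∈ B, w i = b i) with hT
  have key : Function.Bijective
      (fun (w : {x // x ∈ T}) (i : {i // i ∈ A \ B}) => w.1 i.1) := by
    constructor
    · intro w w' h
      have hw := Finset.mem_filter.1 w.2
      have hw' := Finset.mem_filter.1 w'.2
      have : ∀ i ∈ A, w.1 i = w'.1 i := by
        intro i hi
        by_cases hiB : i ∈ B
        · rw [hw.2 i hiB, hw'.2 i hiB]
        · exact congrFun h ⟨i, Finset.mem_sdiff.2 ⟨hi, hiB⟩⟩
      exact Subtype.ext (hinj A hA w.1 hw.1 w'.1 hw'.1 this)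
    · intro h
      obtain ⟨w, hwC, hwg⟩ := restrict_surj C hcard hinj A hA
        (fun i => if hi : i ∈ A \ B then h ⟨i, hi⟩ else b i)
      have hwT : w ∈ T := by
        refine Finset.mem_filter.2 ⟨hwC, fun i hi => ?_⟩
        rw [hwg i (hBA hi)]
        rw [dif_neg (fun hc => (Finset.mem_sdiff.1 hc).2 hi)]
      refine ⟨⟨w, hwT⟩, ?_⟩
      funext i
      have := hwg i.1 (Finset.mem_sdiff.1 i.2).1
      simp only [this, dif_pos i.2]
  have := Fintype.card_of_bijective key
  rw [Fintype.card_coe, Fintype.card_fun, Fintype.card_coe, Fintype.card_fin,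
    Finset.card_sdiff_of_subset hBA, hA] at this
  exact this

lemma sq_sub_one (d : ℕ) (hd : 1 ≤ d) : d ^ 2 - 1 = (d + 1) * (d - 1) := by
  obtain ⟨e, rfl⟩ : ∃ e, d = e + 1 := ⟨d - 1, by omega⟩
  have h1 : (e + 1) ^ 2 = e * e + 2 * e + 1 := by ring
  have h2 : (e + 1 + 1) * (e + 1 - 1) = e * e + 2 * e := by
    have : e + 1 - 1 = e := rfl
    rw [this]; ring
  omega

lemma arith2 (n d : ℕ) (h4 : 4 ≤ n) (hd : 2 ≤ d) (h : n - (n / 2 - 2) ≤ d + 1) :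
    n ≤ 2 * d := by omega

lemma good_small {n d : ℕ} (hd : 2 ≤ d) (hn : n / 2 = 1) : Good n d := by
  refine ⟨Finset.image (fun v : Fin d => (fun _ : Fin n => v)) Finset.univ, ?_, ?_⟩
  · rw [hn, pow_one, Finset.card_image_of_injective _ ?_, Finset.card_univ, Fintype.card_fin]
    intro v v' h
    have hn1 : 0 < n := by omega
    exact congrFun h ⟨0, hn1⟩
  · intro A hA w hw w' hw' hag
    simp only [Finset.mem_image] at hw hw'
    obtain ⟨v, _, rfl⟩ := hw
    obtain ⟨v', _, rfl⟩ := hw'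
    rw [hn] at hA
    obtain ⟨i, hi⟩ := Finset.card_pos.1 (by omega : 0 < A.card)
    funext _
    exact hag i hi


lemma good_bound {n d : ℕ} (hd : 2 ≤ d) (hn : 2 ≤ n) (hg : Good n d) : n ≤ 2 * d := by
  rcases Nat.lt_or_ge n 4 with h4 | h4
  · omega
  obtain ⟨C, hcard, hinj⟩ := hg
  have hmn : n / 2 ≤ n := by omega
  have hd0 : 0 < d := by omega
  have hd1 : 0 < d - 1 := by omega
  have hd1' : 1 ≤ d := by omega
  have hs1 : n / 2 - (n / 2 - 2) = 2 := by omega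
  have hs2 : n / 2 - (n / 2 - 1) = 1 := by omega
  have hs3 : n / 2 - 2 + 1 = n / 2 - 1 := by omega
  have hs5 : n / 2 - 2 + 1 + 1 = n / 2 := by omega
  have hle1 : n / 2 - 1 ≤ n / 2 := by omega
  have hle2 : n / 2 - 2 ≤ n / 2 := by omega
  obtain ⟨F, -, hF⟩ := Finset.exists_subset_card_eq
    (show n / 2 - 2 ≤ (Finset.univ : Finset (Fin n)).card by
      rw [Finset.card_univ, Fintype.card_fin]; omega)
  set D := C.filter (fun w => ∀ i ∈ F, w i = (⟨0, hd0⟩ : Fin d)) with hD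
  have hDcard : D.card = d ^ 2 := by
    have := count_filter C hcard hinj hmn F (hF ▸ hle2) (fun _ => (⟨0, hd0⟩ : Fin d))
    rwa [hF, hs1] at this
  have pairct : ∀ i : Fin n, i ∉ F → ∀ w ∈ D,
      (D.filter (fun w' => w' i = w i)).card = d := by
    intro i hiF w hwD
    have hins : (insert i F).card = n / 2 - 1 := by
      rw [Finset.card_insert_of_notMem hiF, hF]; exact hs3
    have hcf := count_filter C hcard hinj hmn (insert i F)
      (le_trans (le_of_eq hins) hle1)
      (fun j => if j = i then w i else (⟨0, hd0⟩ : Fin d))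
    rw [hins, hs2, pow_one] at hcf
    have heq : D.filter (fun w' => w' i = w i)
        = C.filter (fun w' => ∀ j ∈ insert i F,
            w' j = if j = i then w i else (⟨0, hd0⟩ : Fin d)) := by
      ext w'
      simp only [hD, Finset.mem_filter, Finset.mem_insert, and_assoc]
      constructor
      · rintro ⟨hwC, hF0, hwi⟩
        refine ⟨hwC, fun j hj => ?_⟩
        rcases hj with rfl | hj
        · simpa using hwi
        · have hji : j ≠ i := fun hc => hiF (hc ▸ hj)
          simp [hji, hF0 j hj]
      · rintro ⟨hwC, hcond⟩
        refine ⟨hwC, fun j hj => ?_, ?_⟩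
        · have hji : j ≠ i := fun hc => hiF (hc ▸ hj)
          have := hcond j (Or.inr hj)
          simpa [hji] using this
        · simpa using hcond i (Or.inl rfl)
    rw [heq, hcf]
  have hDne : D.Nonempty := Finset.card_pos.1 (by rw [hDcard]; positivity)
  obtain ⟨w, hwD⟩ := hDne
  have hRcard : (Fᶜ : Finset (Fin n)).card = n - (n / 2 - 2) := by
    rw [Finset.card_compl, hF, Fintype.card_fin]
  have hdisj : ∀ i ∈ (Fᶜ : Finset (Fin n)), ∀ j ∈ (Fᶜ : Finset (Fin n)), i ≠ j →
      Disjoint ((D.filter (fun w' => w' i = w i)).erase w)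
        ((D.filter (fun w' => w' j = w j)).erase w) := by
    intro i hiR j hjR hij
    rw [Finset.disjoint_left]
    intro w' hwi hwj
    have hiF : i ∉ F := Finset.mem_compl.1 hiR
    have hjF : j ∉ F := Finset.mem_compl.1 hjR
    have h1 := Finset.mem_filter.1 (Finset.mem_of_mem_erase hwi)
    have h2 := Finset.mem_filter.1 (Finset.mem_of_mem_erase hwj)
    have hne := Finset.ne_of_mem_erase hwi
    have hA : (insert i (insert j F)).card = n / 2 := by
      rw [Finset.card_insert_of_notMem (by simp [hiF, hij]),
        Finset.card_insert_of_notMem hjF, hF]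
      exact hs5
    have hwD' := Finset.mem_filter.1 h1.1
    have hwD'' := Finset.mem_filter.1 hwD
    apply hne
    apply hinj _ hA w' hwD'.1 w hwD''.1
    intro a ha
    rcases Finset.mem_insert.1 ha with rfl | ha
    · exact h1.2
    rcases Finset.mem_insert.1 ha with rfl | ha
    · exact h2.2
    · rw [hwD'.2 a ha, hwD''.2 a ha]
  have hUcard : ((Fᶜ : Finset (Fin n)).biUnion
      (fun i => (D.filter (fun w' => w' i = w i)).erase w)).card
      = (Fᶜ : Finset (Fin n)).card * (d - 1) := by
    rw [Finset.card_biUnion hdisj]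
    rw [Finset.sum_congr rfl (fun i hiR => ?_), Finset.sum_const, smul_eq_mul]
    rw [Finset.card_erase_of_mem, pairct i (Finset.mem_compl.1 hiR) w hwD]
    exact Finset.mem_filter.2 ⟨hwD, rfl⟩
  have hUsub : ((Fᶜ : Finset (Fin n)).biUnion
      (fun i => (D.filter (fun w' => w' i = w i)).erase w)) ⊆ D.erase w := by
    intro w' hw'
    obtain ⟨i, hiR, hwi⟩ := Finset.mem_biUnion.1 hw'
    exact Finset.mem_erase.2 ⟨Finset.ne_of_mem_erase hwi,
      (Finset.mem_filter.1 (Finset.mem_of_mem_erase hwi)).1⟩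
  have hle : (Fᶜ : Finset (Fin n)).card * (d - 1) ≤ d ^ 2 - 1 := by
    rw [← hUcard, ← hDcard, ← Finset.card_erase_of_mem hwD]
    exact Finset.card_le_card hUsub
  rw [hRcard, sq_sub_one d hd1'] at hle
  exact arith2 n d h4 hd (Nat.le_of_mul_le_mul_right hle hd1)

lemma good_step {n d : ℕ} (hd : 2 ≤ d) (hn : 2 ≤ n) (hg : Good (n + 1) d) : Good n d := by
  obtain ⟨C, hcard, hinj⟩ := hg
  have hd0 : 0 < d := by omega
  rcases Nat.even_or_odd n with he | ho
  · -- n even, puncture the last coordinate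
    have hmod := Nat.even_iff.mp he
    have hhalf : (n + 1) / 2 = n / 2 := by omega
    have hmn : n / 2 ≤ n := by omega
    rw [hhalf] at hcard hinj
    -- an (n/2)-subset of the castSucc range
    obtain ⟨A₀, -, hA₀⟩ := Finset.exists_subset_card_eq
      (show n / 2 ≤ (Finset.univ : Finset (Fin n)).card by
        rw [Finset.card_univ, Fintype.card_fin]; omega)
    have einj : ∀ w ∈ C, ∀ w' ∈ C,
        (fun i => w (Fin.castSucc i)) = (fun i => w' (Fin.castSucc i)) → w = w' := by
      intro w hw w' hw' h
      apply hinj (A₀.image Fin.castSucc)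
        (by rw [Finset.card_image_of_injective _ (Fin.castSucc_injective n), hA₀])
        w hw w' hw'
      intro i hi
      obtain ⟨j, -, rfl⟩ := Finset.mem_image.1 hi
      exact congrFun h j
    refine ⟨C.image (fun w => fun i : Fin n => w (Fin.castSucc i)), ?_, ?_⟩
    · rw [Finset.card_image_of_injOn (fun w hw w' hw' h => einj w hw w' hw' h), hcard]
    · intro A hA w hw w' hw' hag
      simp only [Finset.mem_image] at hw hw'
      obtain ⟨v, hv, rfl⟩ := hw
      obtain ⟨v', hv', rfl⟩ := hw'
      have : v = v' := by
        apply hinj (A.image Fin.castSucc)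
          (by rw [Finset.card_image_of_injective _ (Fin.castSucc_injective n), hA])
          v hv v' hv'
        intro i hi
        obtain ⟨j, hj, rfl⟩ := Finset.mem_image.1 hi
        exact hag j hj
      rw [this]
  · -- n odd, shorten at the last coordinate
    have hmod := Nat.odd_iff.mp ho
    have hhalf : (n + 1) / 2 = n / 2 + 1 := by omega
    rw [hhalf] at hcard hinj
    have hk1 : n / 2 + 1 ≤ n + 1 := by omega
    set C₀ := C.filter (fun w => w (Fin.last n) = (⟨0, hd0⟩ : Fin d)) with hC₀
    have hC₀card : C₀.card = d ^ (n / 2) := by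
      have := count_filter C hcard hinj hk1 {Fin.last n}
        (by rw [Finset.card_singleton]; omega) (fun _ => (⟨0, hd0⟩ : Fin d))
      rw [Finset.card_singleton] at this
      have heq : C.filter (fun w => ∀ i ∈ ({Fin.last n} : Finset (Fin (n+1))),
          w i = (⟨0, hd0⟩ : Fin d)) = C₀ := by
        ext w; simp [hC₀]
      rwa [heq, Nat.add_sub_cancel] at this
    have einj : ∀ w ∈ C₀, ∀ w' ∈ C₀,
        (fun i => w (Fin.castSucc i)) = (fun i => w' (Fin.castSucc i)) → w = w' := by
      intro w hw w' hw' h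
      have h1 := (Finset.mem_filter.1 hw).2
      have h2 := (Finset.mem_filter.1 hw').2
      funext i
      rcases Fin.eq_castSucc_or_eq_last i with ⟨j, rfl⟩ | rfl
      · exact congrFun h j
      · rw [h1, h2]
    refine ⟨C₀.image (fun w => fun i : Fin n => w (Fin.castSucc i)), ?_, ?_⟩
    · rw [Finset.card_image_of_injOn (fun w hw w' hw' h => einj w hw w' hw' h), hC₀card]
    · intro A hA w hw w' hw' hag
      simp only [Finset.mem_image] at hw hw'
      obtain ⟨v, hv, rfl⟩ := hw
      obtain ⟨v', hv', rfl⟩ := hw'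
      have hvv : v = v' := by
        have hlast : Fin.last n ∉ A.image Fin.castSucc := by
          simp only [Finset.mem_image]
          rintro ⟨j, -, hj⟩
          exact absurd (congrArg Fin.val hj) (by simp [Fin.ext_iff]; omega)
        apply hinj (insert (Fin.last n) (A.image Fin.castSucc))
          (by rw [Finset.card_insert_of_notMem hlast,
            Finset.card_image_of_injective _ (Fin.castSucc_injective n), hA])
          v (Finset.mem_filter.1 hv).1 v' (Finset.mem_filter.1 hv').1
        intro i hi
        rcases Finset.mem_insert.1 hi with rfl | hi
        · rw [(Finset.mem_filter.1 hv).2, (Finset.mem_filter.1 hv').2]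
        · obtain ⟨j, hj, rfl⟩ := Finset.mem_image.1 hi
          exact hag j hj
      rw [hvv]

lemma good_of_ame {n d : ℕ} (hd : 2 ≤ d) (ψ : (Fin n → Fin d) → ℂ)
    (hψ : IsAME n d ψ) (hms : HasMinimalSupport n d ψ) : Good n d := by
  set S := Finset.univ.filter (fun s : Fin n → Fin d => ψ s ≠ 0) with hS
  have hSset : {s : Fin n → Fin d | ψ s ≠ 0} = ↑S := by
    ext s; simp [hS]
  have hScard : S.card = d ^ (n / 2) := by
    rw [← Set.ncard_coe_finset, ← hSset, hms]
  refine ⟨S, hScard, ?_⟩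
  intro A hA w hw w' hw' hag
  -- surjectivity of restriction to A
  have hsurj : Function.Surjective
      (fun (w : {x // x ∈ S}) (i : {i // i ∈ A}) => w.1 i.1) := by
    intro g
    have hsum := (hψ.2 A (le_of_eq hA) g g)
    rw [if_pos rfl] at hsum
    have hne : ((d : ℂ) ^ A.card)⁻¹ ≠ 0 := by
      apply inv_ne_zero
      apply pow_ne_zero
      exact_mod_cast (by omega : d ≠ 0)
    have : ∃ a : {i : Fin n // i ∉ A} → Fin d,
        ψ (combine A a g) * (starRingEnd ℂ) (ψ (combine A a g)) ≠ 0 := by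
      by_contra hc
      push_neg at hc
      rw [Finset.sum_congr rfl (fun a _ => hc a), Finset.sum_const, smul_zero] at hsum
      exact hne hsum.symm
    obtain ⟨a, ha⟩ := this
    have hmem : combine A a g ∈ S := by
      simp only [hS, Finset.mem_filter, Finset.mem_univ, true_and]
      exact fun hc => ha (by rw [hc, zero_mul])
    refine ⟨⟨combine A a g, hmem⟩, ?_⟩
    funext i
    exact dif_pos i.2
  have hbij : Function.Bijective
      (fun (w : {x // x ∈ S}) (i : {i // i ∈ A}) => w.1 i.1) := by
    rw [Fintype.bijective_iff_surjective_and_card]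
    refine ⟨hsurj, ?_⟩
    rw [Fintype.card_coe, hScard, Fintype.card_fun, Fintype.card_coe, Fintype.card_fin, hA]
  have := hbij.1 (a₁ := ⟨w, hw⟩) (a₂ := ⟨w', hw'⟩) ?_
  · exact Subtype.ext_iff.1 this
  · funext i
    exact hag i.1 i.2

lemma ame_of_good {n d : ℕ} (hd : 2 ≤ d) (hn : 2 ≤ n) (hg : Good n d) :
    ∃ ψ : (Fin n → Fin d) → ℂ, IsAME n d ψ ∧ HasMinimalSupport n d ψ := by
  obtain ⟨C, hcard, hinj⟩ := hg
  have hd0 : 0 < d := by omega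
  have hmn : n / 2 ≤ n := by omega
  have hcomp : n / 2 ≤ n - n / 2 := by omega
  have hdR : (0:ℝ) < (d:ℝ) ^ (n / 2) := by positivity
  have hdC : (d:ℂ) ≠ 0 := by exact_mod_cast (by omega : d ≠ 0)
  set r : ℝ := (Real.sqrt ((d:ℝ) ^ (n / 2)))⁻¹ with hrdef
  have hr : 0 < r := by
    rw [hrdef]
    exact inv_pos.2 (Real.sqrt_pos.2 hdR)
  have hr2 : r ^ 2 = ((d:ℝ) ^ (n / 2))⁻¹ := by
    rw [hrdef, inv_pow, Real.sq_sqrt hdR.le]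
  set ψ : (Fin n → Fin d) → ℂ := fun s => if s ∈ C then (r : ℂ) else 0 with hψdef
  have hmul : ∀ s, s ∈ C → ψ s * (starRingEnd ℂ) (ψ s) = ((d:ℂ) ^ (n / 2))⁻¹ := by
    intro s hs
    simp only [hψdef, if_pos hs, Complex.conj_ofReal]
    rw [← Complex.ofReal_mul, ← pow_two, hr2]
    push_cast
    ring
  have hsupp : {s : Fin n → Fin d | ψ s ≠ 0} = ↑C := by
    ext s
    simp only [Set.mem_setOf_eq, hψdef, Finset.coe_mem, Finset.mem_coe]
    by_cases hs : s ∈ C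
    · simp [hs, Complex.ofReal_ne_zero, hr.ne']
    · simp [hs]
  refine ⟨ψ, ⟨?_, ?_⟩, ?_⟩
  · -- normalization
    have hterm : ∀ s : Fin n → Fin d, ‖ψ s‖ ^ 2
        = if s ∈ C then ((d:ℝ) ^ (n / 2))⁻¹ else 0 := by
      intro s
      by_cases hs : s ∈ C
      · simp only [hψdef, if_pos hs, Complex.norm_real, Real.norm_eq_abs, sq_abs, hr2]
      · simp [hψdef, hs]
    rw [Finset.sum_congr rfl (fun s _ => hterm s), ← Finset.sum_filter,
      Finset.filter_univ_mem, Finset.sum_const, hcard, nsmul_eq_mul]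
    push_cast
    exact mul_inv_cancel₀ (by positivity)
  · -- AME conditions
    intro B hB b b'
    have hBadd : n / 2 - B.card + B.card = n / 2 := by omega
    have hnB : n / 2 ≤ n - B.card := by omega
    by_cases hbb : b = b'
    · subst hbb
      rw [if_pos rfl]
      have hterm : ∀ a : {i : Fin n // i ∉ B} → Fin d,
          ψ (combine B a b) * (starRingEnd ℂ) (ψ (combine B a b))
          = if combine B a b ∈ C then ((d:ℂ) ^ (n / 2))⁻¹ else 0 := by
        intro a
        by_cases hc : combine B a b ∈ C
        · rw [if_pos hc, hmul _ hc]
        · simp [hψdef, hc]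
      rw [Finset.sum_congr rfl (fun a _ => hterm a), ← Finset.sum_filter]
      -- count the terms
      have hbij : (Finset.univ.filter
            (fun a : {i : Fin n // i ∉ B} → Fin d => combine B a b ∈ C)).card
          = (C.filter (fun w => ∀ i ∈ B,
              w i = (fun j => if h : j ∈ B then b ⟨j, h⟩ else (⟨0, hd0⟩ : Fin d)) i)).card := by
        apply Finset.card_bij' (i := fun a _ => combine B a b)
          (j := fun w _ => fun i : {i : Fin n // i ∉ B} => w i.1)
        · intro a ha
          refine Finset.mem_filter.2 ⟨(Finset.mem_filter.1 ha).2, fun i hi => ?_⟩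
          simp only [combine, dif_pos hi]
        · intro w hw
          have hw' := Finset.mem_filter.1 hw
          have hcomb : combine B (fun i : {i : Fin n // i ∉ B} => w i.1) b = w := by
            funext i
            by_cases hi : i ∈ B
            · have := hw'.2 i hi
              simp only [dif_pos hi] at this
              simp only [combine, dif_pos hi, this]
            · simp only [combine, dif_neg hi]
          refine Finset.mem_filter.2 ⟨Finset.mem_univ _, ?_⟩
          rw [hcomb]
          exact hw'.1
        · intro a ha
          funext i
          simp only [combine, dif_neg i.2]
        · intro w hw
          have hw' := Finset.mem_filter.1 hw
          funext i
          by_cases hi : i ∈ B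
          · have := hw'.2 i hi
            simp only [dif_pos hi] at this
            simp only [combine, dif_pos hi, this]
          · simp only [combine, dif_neg hi]
      rw [Finset.sum_const, hbij,
        count_filter C hcard hinj hmn B hB _, nsmul_eq_mul]
      have hsplit : (d:ℂ) ^ (n / 2) = (d:ℂ) ^ (n / 2 - B.card) * (d:ℂ) ^ B.card := by
        rw [← pow_add]
        congr 1
        exact hBadd.symm
      push_cast
      rw [hsplit, mul_inv, ← mul_assoc,
        mul_inv_cancel₀ (pow_ne_zero _ hdC), one_mul]
    · rw [if_neg hbb]
      apply Finset.sum_eq_zero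
      intro a _
      by_cases h1 : combine B a b ∈ C
      · by_cases h2 : combine B a b' ∈ C
        · exfalso
          -- the two codewords agree outside B, hence on an (n/2)-set, hence equal
          have hcompl : n / 2 ≤ (Bᶜ : Finset (Fin n)).card := by
            rw [Finset.card_compl, Fintype.card_fin]
            omega
          obtain ⟨A, hAsub, hA⟩ := Finset.exists_subset_card_eq hcompl
          have heq : combine B a b = combine B a b' := by
            apply hinj A hA _ h1 _ h2
            intro i hi
            have hiB : i ∉ B := Finset.mem_compl.1 (hAsub hi)
            simp only [combine, dif_neg hiB]
          apply hbb
          funext i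
          have := congrFun heq i.1
          simpa only [combine, dif_pos i.2] using this
        · simp [hψdef, h2]
      · simp [hψdef, h1]
  · -- minimal support
    rw [HasMinimalSupport, hsupp, Set.ncard_coe_finset, hcard]


/-- For every `d ≥ 2` there is an `N ≥ 3` such that a minimally supported `AME(n,d)`
state exists if and only if `n ≤ N`. -/
theorem exists_threshold (d : ℕ) (hd : 2 ≤ d) :
    ∃ N : ℕ, 3 ≤ N ∧ ∀ n : ℕ, 2 ≤ n →
      ((∃ ψ : (Fin n → Fin d) → ℂ, IsAME n d ψ ∧ HasMinimalSupport n d ψ) ↔ n ≤ N) := by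
  have h2 : Good 2 d := good_small hd (by norm_num)
  have h3 : Good 3 d := good_small hd (by norm_num)
  set S := (Finset.Icc 2 (2 * d)).filter (fun n => Good n d) with hS
  have h2S : 2 ∈ S := Finset.mem_filter.2 ⟨Finset.mem_Icc.2 ⟨le_refl 2, by omega⟩, h2⟩
  have h3S : 3 ∈ S := Finset.mem_filter.2 ⟨Finset.mem_Icc.2 ⟨by omega, by omega⟩, h3⟩
  have hne : S.Nonempty := ⟨2, h2S⟩
  refine ⟨S.max' hne, S.le_max' 3 h3S, ?_⟩
  intro n hn
  constructor
  · rintro ⟨ψ, hψ, hms⟩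
    have hg := good_of_ame hd ψ hψ hms
    exact S.le_max' n (Finset.mem_filter.2
      ⟨Finset.mem_Icc.2 ⟨hn, good_bound hd hn hg⟩, hg⟩)
  · intro hle
    have hmaxg : Good (S.max' hne) d := (Finset.mem_filter.1 (S.max'_mem hne)).2
    have key : ∀ t k, 2 ≤ k → k + t = S.max' hne → Good k d := by
      intro t
      induction t with
      | zero =>
        intro k hk hkt
        rw [Nat.add_zero] at hkt
        rwa [hkt]
      | succ t ih =>
        intro k hk hkt
        exact good_step hd hk (ih (k + 1) (by omega) (by omega))
    exact ame_of_good hd hn (key (S.max' hne - n) n hn (by omega))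

end AMEPaper
end
end

section
/- Let n, d ≥ 2 be integers. An AME(n,d) state of minimal support exists if and only if there exists an MDS code over the alphabet Fin d of wordlength n and minimum distance δ = ⌈n/2⌉ + 1 (equivalently, of combinatorial dimension k = ⌊n/2⌋). -/
/-!
Both directions rest on one combinatorial fact about a code `C` with `|C| = d ^ k`,
`k = ⌊n/2⌋`: its minimum distance is at least `n - k + 1` iff restricting codewords to any `k`
sites is one-to-one (two codewords agreeing on `k` sites are at distance `≤ n - k`). For an AME
state the diagonal of `ρ_B`, `|B| = k`, is nonzero, so restriction of the support to `B` is onto,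
hence one-to-one by counting. Conversely, for the uniform superposition of an MDS code, the
off-diagonal entries of `ρ_B` vanish because distinct codewords cannot differ only inside `B`,
and the diagonal entries count the codewords extending `b`: each such fiber injects into the
configurations on `K \ B` for a `K ⊇ B` of size `k`, and the fibers together exhaust `C`, so
each has exactly `d ^ (k - |B|)` elements.
-/

open scoped BigOperators Classical

noncomputable section

namespace AMEPaper

open Finset


section Codes

variable {ι α : Type*} [Fintype ι] [DecidableEq α] {C : Finset (ι → α)} {δ k : ℕ}

theorem hammingDist_add_card_le_of_restrict_eq [DecidableEq ι] {B : Finset ι} {w w' : ι → α}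
    (h : B.restrict w = B.restrict w') : hammingDist w w' + #B ≤ Fintype.card ι := by
  have hsub : ({i | w i ≠ w' i} : Finset ι) ⊆ Bᶜ := fun i hi =>
    mem_compl.2 fun hiB => (mem_filter.1 hi).2 (congrFun h ⟨i, hiB⟩)
  calc hammingDist w w' + #B ≤ #Bᶜ + #B := Nat.add_le_add_right (card_le_card hsub) _
    _ = Fintype.card ι := card_compl_add_card B

theorem exists_card_eq_restrict_eq_of_hammingDist_add_le {m : ℕ} {w w' : ι → α}
    (h : hammingDist w w' + m ≤ Fintype.card ι) :
    ∃ B : Finset ι, #B = m ∧ B.restrict w = B.restrict w' := by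
  have hagree : hammingDist w w' + #({i | w i = w' i} : Finset ι) = Fintype.card ι := by
    rw [add_comm, hammingDist, ← card_univ]
    exact card_filter_add_card_filter_not _
  obtain ⟨B, hBA, hB⟩ := exists_subset_card_eq (s := ({i | w i = w' i} : Finset ι)) (n := m)
    (by omega)
  exact ⟨B, hB, funext fun i => (mem_filter.1 (hBA i.2)).2⟩

theorem injOn_restrict_of_pairwise_le_hammingDist [DecidableEq ι]
    (hC : (C : Set (ι → α)).Pairwise (δ ≤ hammingDist · ·)) {B : Finset ι}
    (hB : Fintype.card ι < #B + δ) : Set.InjOn B.restrict (C : Set (ι → α)) := by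
  intro w hw w' hw' h
  by_contra hne
  have := hammingDist_add_card_le_of_restrict_eq h
  have := hC hw hw' hne
  omega

theorem pairwise_le_hammingDist_of_injOn_restrict
    (hC : ∀ B : Finset ι, #B = k → Set.InjOn B.restrict (C : Set (ι → α)))
    (hkδ : k + δ ≤ Fintype.card ι + 1) : (C : Set (ι → α)).Pairwise (δ ≤ hammingDist · ·) := by
  intro w hw w' hw' hne
  by_contra! hlt
  obtain ⟨B, hB, h⟩ := exists_card_eq_restrict_eq_of_hammingDist_add_le (m := k) (w := w)
    (w' := w') (by omega)
  exact hne (hC B hB hw hw' h)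

theorem exists_ne_hammingDist_add_le_of_pow_lt_card [DecidableEq ι] [Fintype α] {m : ℕ}
    (hm : m ≤ Fintype.card ι) (hC : Fintype.card α ^ m < #C) :
    ∃ w ∈ C, ∃ w' ∈ C, w ≠ w' ∧ hammingDist w w' + m ≤ Fintype.card ι := by
  obtain ⟨B, -, hB⟩ := exists_subset_card_eq (s := (univ : Finset ι)) (by simpa using hm)
  have hcard : #(univ : Finset (B → α)) < #C := by simpa [hB] using hC
  obtain ⟨w, hw, w', hw', hne, h⟩ :=
    exists_ne_map_eq_of_card_lt_of_maps_to hcard (f := B.restrict) fun _ _ =>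
      mem_coe.2 (mem_univ _)
  exact ⟨w, hw, w', hw', hne, hB ▸ hammingDist_add_card_le_of_restrict_eq h⟩

theorem card_filter_restrict_eq_le [DecidableEq ι] [Fintype α]
    (hC : (C : Set (ι → α)).Pairwise (δ ≤ hammingDist · ·)) {B K : Finset ι} (hBK : B ⊆ K)
    (hK : Fintype.card ι < #K + δ) (b : B → α) :
    #{w ∈ C | B.restrict w = b} ≤ Fintype.card α ^ (#K - #B) := by
  have hinj :
      Set.InjOn (K \ B).restrict (({w ∈ C | B.restrict w = b} : Finset _) : Set (ι → α)) := by
    intro w hw w' hw' h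
    simp only [coe_filter, Set.mem_ofPred_eq] at hw hw'
    refine injOn_restrict_of_pairwise_le_hammingDist hC hK hw.1 hw'.1 (funext fun i => ?_)
    by_cases hi : (i : ι) ∈ B
    · exact (congrFun hw.2 ⟨i, hi⟩).trans (congrFun hw'.2 ⟨i, hi⟩).symm
    · exact congrFun h ⟨i, mem_sdiff.2 ⟨i.2, hi⟩⟩
  calc #{w ∈ C | B.restrict w = b} ≤ #(univ : Finset (↥(K \ B) → α)) :=
        card_le_card_of_injOn _ (fun _ _ => mem_coe.2 (mem_univ _)) hinj
    _ = Fintype.card α ^ (#K - #B) := by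
      rw [card_univ, Fintype.card_fun, Fintype.card_coe, card_sdiff_of_subset hBK]

theorem card_filter_restrict_eq [DecidableEq ι] [Fintype α]
    (hC : (C : Set (ι → α)).Pairwise (δ ≤ hammingDist · ·)) (hcard : #C = Fintype.card α ^ k)
    (hk : k ≤ Fintype.card ι) (hkδ : Fintype.card ι < k + δ) {B : Finset ι} (hB : #B ≤ k)
    (b : B → α) : #{w ∈ C | B.restrict w = b} = Fintype.card α ^ (k - #B) := by
  obtain ⟨K, hBK, hK⟩ := exists_superset_card_eq hB hk
  have hle (b' : B → α) : #{w ∈ C | B.restrict w = b'} ≤ Fintype.card α ^ (k - #B) :=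
    hK ▸ card_filter_restrict_eq_le hC hBK (hK ▸ hkδ) b'
  have hsum : ∑ b' : B → α, #{w ∈ C | B.restrict w = b'} =
      ∑ _b' : B → α, Fintype.card α ^ (k - #B) := by
    rw [← card_eq_sum_card_fiberwise fun _ _ => mem_coe.2 (mem_univ _), hcard, sum_const,
      card_univ, Fintype.card_fun, Fintype.card_coe, smul_eq_mul, ← pow_add, Nat.add_sub_cancel' hB]
  exact (sum_eq_sum_iff_of_le fun b' _ => hle b').1 hsum b (mem_univ b)

end Codes

section States

variable {n d : ℕ}

theorem restrict_combine (B : Finset (Fin n)) (a : {i // i ∉ B} → Fin d) (b : B → Fin d) :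
    B.restrict (combine B a b) = b :=
  funext fun i => dif_pos i.2

theorem restrict_compl_combine (B : Finset (Fin n)) (a : {i // i ∉ B} → Fin d) (b : B → Fin d) :
    Bᶜ.restrict (combine B a b) = fun i : {i // i ∈ Bᶜ} => a ⟨i, mem_compl.1 i.2⟩ :=
  funext fun i => dif_neg (mem_compl.1 i.2)

theorem combine_restrict (B : Finset (Fin n)) (w : Fin n → Fin d) :
    combine B (fun i => w i) (B.restrict w) = w := by
  funext i
  unfold combine
  split_ifs <;> rfl

theorem card_filter_combine_mem (C : Finset (Fin n → Fin d)) (B : Finset (Fin n))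
    (b : B → Fin d) :
    #{a | combine B a b ∈ C} = #{w ∈ C | B.restrict w = b} := by
  refine card_nbij' (fun a => combine B a b) (fun w i => w i) ?_ ?_ ?_ ?_
  · intro a ha
    simp_all [restrict_combine]
  · intro w hw
    simp only [coe_filter, Set.mem_ofPred_eq] at hw
    simp [← hw.2, combine_restrict, hw.1]
  · intro a _
    funext i
    exact dif_neg i.2
  · intro w hw
    simp only [coe_filter, Set.mem_ofPred_eq] at hw
    simp only [← hw.2, combine_restrict]

theorem IsAME.exists_ne_zero_restrict_eq {ψ : (Fin n → Fin d) → ℂ} (hψ : IsAME n d ψ)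
    (hd : d ≠ 0) {B : Finset (Fin n)} (hB : #B ≤ n / 2) (b : B → Fin d) :
    ∃ s, ψ s ≠ 0 ∧ B.restrict s = b := by
  have hdiag := hψ.2 B hB b b
  rw [if_pos rfl] at hdiag
  obtain ⟨a, -, ha⟩ := exists_ne_zero_of_sum_ne_zero
    (hdiag ▸ inv_ne_zero (pow_ne_zero _ (Nat.cast_ne_zero.2 hd)))
  exact ⟨combine B a b, left_ne_zero_of_mul ha, restrict_combine B a b⟩

theorem IsAME.isMDSCode_support {ψ : (Fin n → Fin d) → ℂ} (hψ : IsAME n d ψ)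
    (hsupp : HasMinimalSupport n d ψ) (hn : 2 ≤ n) (hd : 2 ≤ d) :
    IsMDSCode d n ((n + 1) / 2 + 1) (Function.support ψ).toFinset := by
  set S := (Function.support ψ).toFinset
  have hS : #S = d ^ (n / 2) := (Set.ncard_eq_toFinset_card' _).symm.trans hsupp
  have hinj : ∀ B : Finset (Fin n), #B = n / 2 →
      Set.InjOn B.restrict (S : Set (Fin n → Fin d)) := by
    intro B hB
    have himg : S.image B.restrict = univ := eq_univ_of_forall fun b => by
      obtain ⟨s, hs, rfl⟩ := hψ.exists_ne_zero_restrict_eq (by omega) hB.le b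
      exact mem_image_of_mem _ (Set.mem_toFinset.2 hs)
    apply injOn_of_card_image_eq
    rw [hS, himg, card_univ, Fintype.card_fun, Fintype.card_coe, Fintype.card_fin, hB]
  have hpair := pairwise_le_hammingDist_of_injOn_restrict (δ := (n + 1) / 2 + 1) hinj
    (by rw [Fintype.card_fin]; omega)
  obtain ⟨w, hw, w', hw', hne, hle⟩ :=
    exists_ne_hammingDist_add_le_of_pow_lt_card (C := S) (m := n / 2 - 1)
    (by rw [Fintype.card_fin]; omega)
    (by rw [hS, Fintype.card_fin]; exact Nat.pow_lt_pow_right hd (by omega))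
  rw [Fintype.card_fin] at hle
  refine ⟨by rw [hS]; congr 1; omega, fun _ hw _ hw' hne => hpair hw hw' hne,
    w, hw, w', hw', hne, le_antisymm (by omega) (hpair hw hw' hne)⟩

def codeState (C : Finset (Fin n → Fin d)) : (Fin n → Fin d) → ℂ :=
  fun s => if s ∈ C then ((√(#C : ℝ))⁻¹ : ℝ) else 0

theorem support_codeState {C : Finset (Fin n → Fin d)} :
    Function.support (codeState C) = C := by
  ext s
  by_cases hs : s ∈ C
  · simp [codeState, hs, ne_empty_of_mem hs]
  · simp [codeState, hs]

theorem codeState_mul_conj (C : Finset (Fin n → Fin d)) (s s' : Fin n → Fin d) :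
    codeState C s * starRingEnd ℂ (codeState C s') =
      if s ∈ C ∧ s' ∈ C then ((#C : ℂ))⁻¹ else 0 := by
  unfold codeState
  split_ifs with h
  · rw [Complex.conj_ofReal, ← Complex.ofReal_mul, ← mul_inv,
      Real.mul_self_sqrt (Nat.cast_nonneg _)]
    push_cast
    rfl
  all_goals simp_all

theorem sum_norm_codeState_sq {C : Finset (Fin n → Fin d)} (hC : C.Nonempty) :
    ∑ s, ‖codeState C s‖ ^ 2 = 1 := by
  have hnorm (s : Fin n → Fin d) : ‖codeState C s‖ ^ 2 = if s ∈ C then (#C : ℝ)⁻¹ else 0 := by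
    unfold codeState
    split_ifs <;> simp
  simp only [hnorm, sum_ite_mem, univ_inter, sum_const, nsmul_eq_mul]
  exact mul_inv_cancel₀ (Nat.cast_ne_zero.2 hC.card_pos.ne')

theorem isAME_codeState {C : Finset (Fin n → Fin d)} (hd : d ≠ 0) (hcard : #C = d ^ (n / 2))
    (hdist : (C : Set (Fin n → Fin d)).Pairwise ((n + 1) / 2 + 1 ≤ hammingDist · ·)) :
    IsAME n d (codeState C) := by
  have hC : C.Nonempty := card_pos.1 (hcard ▸ pow_pos (Nat.pos_of_ne_zero hd) _)
  refine ⟨sum_norm_codeState_sq hC, fun B hB b b' => ?_⟩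
  simp only [codeState_mul_conj]
  split_ifs with hbb
  · subst hbb
    have hfiber := card_filter_restrict_eq hdist (by rwa [Fintype.card_fin])
      (by rw [Fintype.card_fin]; omega) (by rw [Fintype.card_fin]; omega) hB b
    have hsplit : (d : ℂ) ^ (n / 2) = d ^ (n / 2 - #B) * d ^ #B := by
      rw [← pow_add, Nat.sub_add_cancel hB]
    rw [Fintype.card_fin] at hfiber
    simp only [and_self]
    rw [← sum_filter, sum_const, card_filter_combine_mem, hfiber, hcard, nsmul_eq_mul]
    push_cast
    rw [hsplit, mul_inv, ← mul_assoc, mul_inv_cancel₀ (pow_ne_zero _ (Nat.cast_ne_zero.2 hd)),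
      one_mul]
  · refine sum_eq_zero fun a _ => if_neg fun ⟨h, h'⟩ => hbb ?_
    have heq := injOn_restrict_of_pairwise_le_hammingDist hdist (B := Bᶜ)
      (by rw [card_compl, Fintype.card_fin]; omega) h h'
      (by rw [restrict_compl_combine, restrict_compl_combine])
    simpa only [restrict_combine] using congrArg B.restrict heq

end States

/-- A minimally supported `AME(n,d)` state exists iff there is an MDS code over `Fin d`
with wordlength `n` and minimum distance `δ = ⌈n/2⌉ + 1`. -/
theorem ame_iff_mds (n d : ℕ) (hn : 2 ≤ n) (hd : 2 ≤ d) :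
    (∃ ψ : (Fin n → Fin d) → ℂ, IsAME n d ψ ∧ HasMinimalSupport n d ψ) ↔
      (∃ C : Finset (Fin n → Fin d), IsMDSCode d n ((n + 1) / 2 + 1) C) := by
  constructor
  · rintro ⟨ψ, hψ, hsupp⟩
    exact ⟨_, hψ.isMDSCode_support hsupp hn hd⟩
  · rintro ⟨C, hcard, hdist, -⟩
    have hcard' : #C = d ^ (n / 2) := by rw [hcard]; congr 1; omega
    refine ⟨codeState C, isAME_codeState (by omega) hcard' hdist, ?_⟩
    change (Function.support (codeState C)).ncard = _
    rw [support_codeState, Set.ncard_coe_finset, hcard']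

end AMEPaper
end
end

section
/- Let d ≥ 3 be an integer that is a power of a prime number. Then there exists an AME(d+1,d) state of minimal support. -/
open scoped BigOperators Classical

noncomputable section

namespace AMEPaper

section Aux
variable {F : Type*} [Field F] [Fintype F]

/-- Evaluation of a coefficient vector as a polynomial. -/
def evalc {k : ℕ} (c : Fin k → F) (x : F) : F := ∑ j : Fin k, c j * x ^ (j : ℕ)

lemma evalc_sub {k : ℕ} (c c' : Fin k → F) (x : F) :
    evalc (c - c') x = evalc c x - evalc c' x := by
  simp [evalc, sub_mul, Finset.sum_sub_distrib]

lemma evalc_zero {k : ℕ} (c : Fin k → F) (T : Finset F)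
    (hT : ∀ x ∈ T, evalc c x = 0)
    (hdeg : ∀ j : Fin k, T.card ≤ (j : ℕ) → c j = 0) : c = 0 := by
  classical
  set P : Polynomial F := ∑ j : Fin k, Polynomial.C (c j) * Polynomial.X ^ (j : ℕ) with hP
  have hcoeff : ∀ i : ℕ, P.coeff i = if h : i < k then c ⟨i, h⟩ else 0 := by
    intro i
    have h1 : ∀ j : Fin k, (Polynomial.C (c j) * Polynomial.X ^ (j : ℕ)).coeff i
        = if (j : ℕ) = i then c j else 0 := by
      intro j
      simp [Polynomial.coeff_X_pow, mul_ite, eq_comm]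
    rw [hP, Polynomial.finset_sum_coeff]
    simp_rw [h1]
    by_cases h : i < k
    · rw [dif_pos h, Finset.sum_eq_single_of_mem (⟨i, h⟩ : Fin k) (Finset.mem_univ _)]
      · simp
      · intro j _ hj
        rw [if_neg]
        intro hc
        exact hj (Fin.ext hc)
    · rw [dif_neg h, Finset.sum_eq_zero]
      intro j _
      rw [if_neg]
      intro hc
      exact h (hc ▸ j.isLt)
  have heval : ∀ x : F, P.eval x = evalc c x := by
    intro x
    rw [hP, Polynomial.eval_finset_sum]
    simp [evalc]
  by_cases hT0 : T.card = 0
  · funext j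
    exact hdeg j (by omega)
  · have hdlt : P.natDegree < T.card := by
      have : P.natDegree ≤ T.card - 1 := by
        apply Polynomial.natDegree_le_iff_coeff_eq_zero.2
        intro i hi
        rw [hcoeff i]
        by_cases h : i < k
        · rw [dif_pos h]
          exact hdeg ⟨i, h⟩ (show T.card ≤ i by omega)
        · rw [dif_neg h]
      omega
    have hP0 : P = 0 :=
      Polynomial.eq_zero_of_natDegree_lt_card_of_eval_eq_zero' P T
        (fun x hx => by rw [heval]; exact hT x hx) hdlt
    funext j
    have := hcoeff (j : ℕ)
    rw [hP0] at this
    simpa [j.isLt] using this.symm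

/-- The codeword associated to a coefficient vector: evaluations at all field
elements, plus the top coefficient at the last coordinate. -/
def wrd (e : F ≃ Fin (Fintype.card F)) (m : ℕ) (c : Fin (m + 1) → F) :
    Fin (Fintype.card F + 1) → Fin (Fintype.card F) :=
  fun i => if h : (i : ℕ) < Fintype.card F then e (evalc c (e.symm ⟨(i : ℕ), h⟩))
    else e (c (Fin.last m))

lemma wrd_agree_eq (e : F ≃ Fin (Fintype.card F)) (m : ℕ) {c c' : Fin (m + 1) → F}
    (T : Finset (Fin (Fintype.card F + 1))) (hT : m + 1 ≤ T.card)
    (hag : ∀ i ∈ T, wrd e m c i = wrd e m c' i) : c = c' := by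
  classical
  have key : ∀ i ∈ T, ∀ h : (i : ℕ) < Fintype.card F,
      evalc c (e.symm ⟨(i : ℕ), h⟩) = evalc c' (e.symm ⟨(i : ℕ), h⟩) := by
    intro i hi h
    have h2 := hag i hi
    rw [wrd, wrd, dif_pos h, dif_pos h] at h2
    exact e.injective h2
  have hlt : ∀ i ∈ T.erase (Fin.last (Fintype.card F)), (i : ℕ) < Fintype.card F := by
    intro i hi
    have h1 := Finset.ne_of_mem_erase hi
    have h2 := i.isLt
    have h3 : (i : ℕ) ≠ Fintype.card F := fun hc => h1 (Fin.ext (by simp [hc]))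
    omega
  -- the image of the non-infinity points of T in F
  have main : ∀ (T' : Finset (Fin (Fintype.card F + 1))),
      (∀ i ∈ T', (i : ℕ) < Fintype.card F) → (∀ i ∈ T', i ∈ T) →
      (∀ j : Fin (m + 1), T'.card ≤ (j : ℕ) → c j - c' j = 0) → c = c' := by
    intro T' hT'lt hT'sub hdeg
    have himg : ∃ S : Finset F, S.card = T'.card ∧
        ∀ x ∈ S, ∃ i ∈ T', ∃ h : (i : ℕ) < Fintype.card F, x = e.symm ⟨(i : ℕ), h⟩ := by
      refine ⟨T'.attach.image (fun i => e.symm ⟨(i.1 : ℕ), hT'lt i.1 i.2⟩), ?_, ?_⟩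
      · rw [Finset.card_image_of_injective _ ?_, Finset.card_attach]
        intro i j hij
        have h2 : (i.1 : ℕ) = (j.1 : ℕ) := by
          have h3 := e.symm.injective hij
          simpa [Fin.mk.injEq] using h3
        exact Subtype.ext (Fin.ext h2)
      · intro x hx
        rw [Finset.mem_image] at hx
        obtain ⟨i, hi, rfl⟩ := hx
        exact ⟨i.1, i.2, hT'lt i.1 i.2, rfl⟩
    obtain ⟨S, hScard, hSmem⟩ := himg
    have h0 : c - c' = 0 := by
      apply evalc_zero (c - c') S
      · intro x hx
        obtain ⟨i, hi, h, rfl⟩ := hSmem x hx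
        rw [evalc_sub, key i (hT'sub i hi) h, sub_self]
      · intro j hj
        rw [hScard] at hj
        exact hdeg j hj
    funext j
    have := congrFun h0 j
    simpa [sub_eq_zero] using this
  by_cases hlast : Fin.last (Fintype.card F) ∈ T
  · have htop : c (Fin.last m) = c' (Fin.last m) := by
      have h2 := hag _ hlast
      have hnl : ¬((Fin.last (Fintype.card F) : ℕ) < Fintype.card F) := by simp
      rw [wrd, wrd, dif_neg hnl, dif_neg hnl] at h2
      exact e.injective h2
    refine main (T.erase (Fin.last (Fintype.card F))) hlt
      (fun i hi => Finset.mem_of_mem_erase hi) ?_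
    intro j hj
    have hcard : T.card - 1 ≤ (T.erase (Fin.last (Fintype.card F))).card :=
      Finset.pred_card_le_card_erase
    have hjm : (j : ℕ) = m := by have := j.isLt; omega
    have : j = Fin.last m := Fin.ext (by simpa using hjm)
    rw [this, htop, sub_self]
  · refine main T (fun i hi => ?_) (fun i hi => hi) ?_
    · have h3 : (i : ℕ) ≠ Fintype.card F := by
        intro hc
        exact hlast (by rwa [show i = Fin.last (Fintype.card F) from Fin.ext (by simp [hc])] at hi)
      have := i.isLt; omega
    · intro j hj
      have := j.isLt; omega

lemma wrd_injective (e : F ≃ Fin (Fintype.card F)) (m : ℕ) (hm : m + 1 ≤ Fintype.card F + 1) :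
    Function.Injective (wrd e m) := by
  intro c c' h
  exact wrd_agree_eq e m Finset.univ (by simpa using hm) (fun i _ => congrFun h i)

lemma card_prescribed {α X : Type*} [Fintype α] [Fintype X] (B S : Finset α) (hBS : B ⊆ S)
    (b : {i // i ∈ B} → X) :
    Fintype.card {v : {i // i ∈ S} → X // ∀ i : {i // i ∈ B}, v ⟨i.1, hBS i.2⟩ = b i} =
      Fintype.card X ^ (S.card - B.card) := by
  classical
  have E : {v : {i // i ∈ S} → X // ∀ i : {i // i ∈ B}, v ⟨i.1, hBS i.2⟩ = b i} ≃
      ({i : {i // i ∈ S} // (i.1 : α) ∉ B} → X) :=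
    { toFun := fun v i => v.1 i.1
      invFun := fun g => ⟨fun i => if h : (i.1 : α) ∈ B then b ⟨i.1, h⟩ else g ⟨i, h⟩,
        fun i => dif_pos i.2⟩
      left_inv := by
        intro v
        apply Subtype.ext
        funext i
        by_cases h : (i.1 : α) ∈ B
        · simpa [dif_pos h] using (v.2 ⟨i.1, h⟩).symm
        · simp [dif_neg h]
      right_inv := by
        intro g
        funext i
        simp [dif_neg i.2] }
  rw [Fintype.card_congr E, Fintype.card_fun]
  congr 1
  have hB : Fintype.card {i : {i // i ∈ S} // (i.1 : α) ∈ B} = B.card := by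
    have E2 : {i : {i // i ∈ S} // (i.1 : α) ∈ B} ≃ {i // i ∈ B} :=
      { toFun := fun i => ⟨i.1.1, i.2⟩
        invFun := fun i => ⟨⟨i.1, hBS i.2⟩, i.2⟩
        left_inv := fun i => Subtype.ext (Subtype.ext rfl)
        right_inv := fun i => Subtype.ext rfl }
    rw [Fintype.card_congr E2, Fintype.card_coe]
  rw [Fintype.card_subtype_compl, hB, Fintype.card_coe]

set_option maxHeartbeats 1000000 in
lemma wrd_card (e : F ≃ Fin (Fintype.card F)) (m : ℕ) (hm : m + 1 ≤ Fintype.card F + 1)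
    (B : Finset (Fin (Fintype.card F + 1))) (hB : B.card ≤ m + 1)
    (b : {i // i ∈ B} → Fin (Fintype.card F)) :
    Fintype.card {c : Fin (m + 1) → F // ∀ i : {i // i ∈ B}, wrd e m c i.1 = b i} =
      Fintype.card F ^ (m + 1 - B.card) := by
  classical
  obtain ⟨S, hBS, hScard⟩ := Finset.exists_superset_card_eq hB (by simpa using hm)
  set Φ : (Fin (m + 1) → F) → ({i // i ∈ S} → Fin (Fintype.card F)) :=
    fun c i => wrd e m c i.1 with hΦ
  have hinj : Function.Injective Φ := by
    intro c c' h
    exact wrd_agree_eq e m S (le_of_eq hScard.symm) (fun i hi => congrFun h ⟨i, hi⟩)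
  have hbij : Function.Bijective Φ := by
    rw [Fintype.bijective_iff_injective_and_card]
    refine ⟨hinj, ?_⟩
    rw [Fintype.card_fun, Fintype.card_fun, Fintype.card_coe, hScard, Fintype.card_fin,
      Fintype.card_fin]
  have E := (Equiv.ofBijective Φ hbij).subtypeEquiv
    (p := fun c => ∀ i : {i // i ∈ B}, wrd e m c i.1 = b i)
    (q := fun v => ∀ i : {i // i ∈ B}, v ⟨i.1, hBS i.2⟩ = b i) (fun c => Iff.rfl)
  have hc := card_prescribed B S hBS b
  rw [hScard] at hc
  rw [Fintype.card_fin] at hc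
  refine (Fintype.card_congr E).trans ?_
  convert hc using 2
end Aux

set_option maxHeartbeats 1000000 in
lemma main_construction (F : Type) [Field F] [Fintype F] (hd3 : 3 ≤ Fintype.card F) :
    ∃ ψ : (Fin (Fintype.card F + 1) → Fin (Fintype.card F)) → ℂ,
      IsAME (Fintype.card F + 1) (Fintype.card F) ψ ∧
        HasMinimalSupport (Fintype.card F + 1) (Fintype.card F) ψ := by
  classical
  obtain ⟨m, hm1⟩ : ∃ m, m + 1 = (Fintype.card F + 1) / 2 := ⟨(Fintype.card F + 1) / 2 - 1, by omega⟩
  set e : F ≃ Fin (Fintype.card F) := Fintype.equivFin F with he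
  set Code : Finset (Fin (Fintype.card F + 1) → Fin (Fintype.card F)) :=
    Finset.image (wrd e m) Finset.univ with hCodeDef
  set A : ℝ := Real.sqrt ((((Fintype.card F : ℝ)) ^ (m + 1))⁻¹) with hA
  have hd0 : (0 : ℝ) < (Fintype.card F : ℝ) ^ (m + 1) := by positivity
  have hA0 : 0 < A := Real.sqrt_pos.2 (inv_pos.2 hd0)
  have hAA : A * A = (((Fintype.card F : ℝ)) ^ (m + 1))⁻¹ :=
    Real.mul_self_sqrt (by positivity)
  have hAsq : (A : ℂ) * (starRingEnd ℂ) (A : ℂ) = ((Fintype.card F : ℂ) ^ (m + 1))⁻¹ := by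
    rw [Complex.conj_ofReal, ← Complex.ofReal_mul, hAA]
    push_cast
    ring
  have hinj : Function.Injective (wrd e m) := wrd_injective e m (by omega)
  have hCode : Code.card = Fintype.card F ^ (m + 1) := by
    rw [hCodeDef, Finset.card_image_of_injective _ hinj, Finset.card_univ, Fintype.card_fun,
      Fintype.card_fin]
  refine ⟨fun s => if s ∈ Code then (A : ℂ) else 0, ⟨?_, ?_⟩, ?_⟩
  · -- normalization
    have h1 : ∀ s : Fin (Fintype.card F + 1) → Fin (Fintype.card F),
        ‖if s ∈ Code then (A : ℂ) else 0‖ ^ 2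
          = if s ∈ Code then (((Fintype.card F : ℝ)) ^ (m + 1))⁻¹ else 0 := by
      intro s
      split_ifs with h
      · rw [Complex.norm_real, Real.norm_eq_abs, abs_of_pos hA0, sq, hAA]
      · simp
    rw [Finset.sum_congr rfl fun s _ => h1 s, Finset.sum_ite_mem, Finset.univ_inter,
      Finset.sum_const, hCode, nsmul_eq_mul]
    push_cast
    rw [mul_inv_cancel₀ (by positivity)]
  · -- reduced density matrices
    intro B hB b b'
    have hBm : B.card ≤ m + 1 := by omega
    by_cases hbb : b = b'
    · subst hbb
      rw [if_pos rfl]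
      have h1 : ∀ a : {i : Fin (Fintype.card F + 1) // i ∉ B} → Fin (Fintype.card F),
          (if combine B a b ∈ Code then (A : ℂ) else 0) *
            (starRingEnd ℂ) (if combine B a b ∈ Code then (A : ℂ) else 0)
          = if combine B a b ∈ Code then ((Fintype.card F : ℂ) ^ (m + 1))⁻¹ else 0 := by
        intro a
        split_ifs with h
        · exact hAsq
        · simp
      rw [Finset.sum_congr rfl fun a _ => h1 a]
      have h2 : (∑ a : {i : Fin (Fintype.card F + 1) // i ∉ B} → Fin (Fintype.card F),
          if combine B a b ∈ Code then ((Fintype.card F : ℂ) ^ (m + 1))⁻¹ else 0)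
          = (Finset.univ.filter (fun a : {i : Fin (Fintype.card F + 1) // i ∉ B} →
              Fin (Fintype.card F) => combine B a b ∈ Code)).card
            • ((Fintype.card F : ℂ) ^ (m + 1))⁻¹ := by
        rw [Finset.sum_ite, Finset.sum_const_zero, Finset.sum_const, add_zero]
      rw [h2]
      have hφbij : Function.Bijective
          (fun c : {c : Fin (m + 1) → F // ∀ i : {i // i ∈ B}, wrd e m c i.1 = b i} =>
            (⟨fun i => wrd e m c.1 i.1, by
              have hco : combine B (fun i => wrd e m c.1 i.1) b = wrd e m c.1 := by
                funext i
                by_cases h : i ∈ B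
                · rw [combine, dif_pos h]
                  exact (c.2 ⟨i, h⟩).symm
                · rw [combine, dif_neg h]
              rw [hco]
              exact Finset.mem_image_of_mem _ (Finset.mem_univ _)⟩ :
            {a : {i : Fin (Fintype.card F + 1) // i ∉ B} → Fin (Fintype.card F) //
              combine B a b ∈ Code})) := by
        constructor
        · intro c c' h
          apply Subtype.ext
          apply hinj
          funext i
          by_cases hi : i ∈ B
          · rw [(c.2 ⟨i, hi⟩ : _ = b ⟨i, hi⟩), (c'.2 ⟨i, hi⟩ : _ = b ⟨i, hi⟩)]
          · exact congrFun (congrArg Subtype.val h) ⟨i, hi⟩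
        · rintro ⟨a, ha⟩
          obtain ⟨c, -, hc⟩ := Finset.mem_image.1 ha
          refine ⟨⟨c, fun i => ?_⟩, ?_⟩
          · rw [congrFun hc i.1, combine, dif_pos i.2]
          · apply Subtype.ext
            funext i
            show wrd e m c i.1 = a i
            rw [congrFun hc i.1, combine, dif_neg i.2]
      have hcount : (Finset.univ.filter (fun a : {i : Fin (Fintype.card F + 1) // i ∉ B} →
          Fin (Fintype.card F) => combine B a b ∈ Code)).card
          = Fintype.card F ^ (m + 1 - B.card) := by
        rw [← Fintype.card_subtype, ← Fintype.card_of_bijective hφbij]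
        exact wrd_card e m (by omega) B hBm b
      rw [hcount, nsmul_eq_mul]
      have hcn : (Fintype.card F : ℂ) ≠ 0 := by
        simp only [ne_eq, Nat.cast_eq_zero]
        omega
      push_cast
      field_simp
      rw [← pow_add]
      congr 1
      omega
    · rw [if_neg hbb]
      apply Finset.sum_eq_zero
      intro a _
      by_cases h1 : combine B a b ∈ Code
      · by_cases h2 : combine B a b' ∈ Code
        · exfalso
          obtain ⟨c, -, hc⟩ := Finset.mem_image.1 h1
          obtain ⟨c', -, hc'⟩ := Finset.mem_image.1 h2
          have hcc : c = c' := by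
            apply wrd_agree_eq e m Bᶜ
            · rw [Finset.card_compl, Fintype.card_fin]
              omega
            · intro i hi
              have hiB : i ∉ B := by simpa using hi
              rw [congrFun hc i, congrFun hc' i, combine, combine, dif_neg hiB, dif_neg hiB]
          apply hbb
          funext i
          have h3 : combine B a b i.1 = combine B a b' i.1 := by
            rw [← congrFun hc i.1, ← congrFun hc' i.1, hcc]
          rw [combine, combine, dif_pos i.2, dif_pos i.2] at h3
          simpa using h3
        · simp [h2]
      · simp [h1]
  · -- minimal support
    unfold HasMinimalSupport
    have hset : {s : Fin (Fintype.card F + 1) → Fin (Fintype.card F) |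
        (if s ∈ Code then (A : ℂ) else 0) ≠ 0} = ↑Code := by
      ext s
      by_cases h : s ∈ Code <;>
        simp [h, Complex.ofReal_ne_zero, ne_of_gt hA0]
    rw [hset, Set.ncard_coe_finset, hCode, hm1]


/-- If `d ≥ 3` is a prime power then a minimally supported `AME(d+1,d)` state exists. -/
theorem ame_prime_power (d : ℕ) (hd : 3 ≤ d) (hp : IsPrimePow d) :
    ∃ ψ : (Fin (d + 1) → Fin d) → ℂ,
      IsAME (d + 1) d ψ ∧ HasMinimalSupport (d + 1) d ψ := by
  obtain ⟨p, n, hpp, hn, rfl⟩ := hp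
  haveI : Fact p.Prime := ⟨Nat.prime_iff.mpr hpp⟩
  haveI : Fintype (GaloisField p n) := Fintype.ofFinite _
  have hc : Fintype.card (GaloisField p n) = p ^ n := by
    rw [← Nat.card_eq_fintype_card]
    exact GaloisField.card p n (by omega)
  rw [← hc] at hd ⊢
  exact main_construction (GaloisField p n) hd


end AMEPaper
end
end

section
/- Let d ≥ 3 be an integer that is a power of a prime number. Then there exists an MDS code over an alphabet of size d of wordlength d+1 and combinatorial dimension k = ⌊(d+1)/2⌋ (an extended Reed–Solomon code), i.e., a subset C ⊆ (Fin (d+1) → Fin d) with |C| = d^⌊(d+1)/2⌋ whose minimum Hamming distance is ⌈(d+1)/2⌉ + 1. -/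
open scoped BigOperators Classical

noncomputable section

namespace AMEPaper

open Polynomial in
theorem aux_mds {F : Type} [Field F] [Fintype F] [DecidableEq F] (d k : ℕ)
    (hcard : Fintype.card F = d) (hk2 : 2 ≤ k) (hkd : k ≤ d) :
    ∃ C : Finset (Fin (d + 1) → Fin d),
      C.card = d ^ k ∧
        C.card = d ^ ((d + 1) - (d + 2 - k) + 1) ∧
        (∀ w ∈ C, ∀ w' ∈ C, w ≠ w' → d + 2 - k ≤ hammingDist w w') ∧
        (∃ w ∈ C, ∃ w' ∈ C, w ≠ w' ∧ hammingDist w w' = d + 2 - k) := by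
  have hd0 : 0 < d := by omega
  obtain ⟨e⟩ : Nonempty (Fin d ≃ F) := ⟨(Fintype.equivFinOfCardEq hcard).symm⟩
  set poly : (Fin k → F) → F[X] := fun c => ∑ j : Fin k, Polynomial.C (c j) * X ^ (j : ℕ) with hpoly
  have hcoeff : ∀ (c : Fin k → F) (m : ℕ),
      (poly c).coeff m = if h : m < k then c ⟨m, h⟩ else 0 := by
    intro c m
    simp only [hpoly, finset_sum_coeff, coeff_C_mul, coeff_X_pow, mul_ite, mul_one, mul_zero]
    split
    · next h =>
      rw [Finset.sum_eq_single (⟨m, h⟩ : Fin k)]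
      · simp
      · intro j _ hj
        simp only [ite_eq_right_iff]
        intro hjm
        exact absurd (Fin.ext hjm.symm) hj
      · simp
    · next h =>
      apply Finset.sum_eq_zero
      intro j _
      simp only [ite_eq_right_iff]
      intro hjm
      exact absurd (hjm ▸ j.isLt) h
  have hdeg : ∀ c : Fin k → F, (poly c).natDegree < k := by
    intro c
    have : (poly c).natDegree ≤ k - 1 := by
      apply natDegree_sum_le_of_forall_le
      intro j _
      refine (natDegree_C_mul_le _ _).trans ?_
      rw [natDegree_X_pow]; omega
    omega
  have heval : ∀ (c : Fin k → F) (x : F), (poly c).eval x = ∑ j : Fin k, c j * x ^ (j : ℕ) := by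
    intro c x; simp [hpoly, eval_finset_sum]
  -- the word map
  set word : (Fin k → F) → Fin (d + 1) → Fin d := fun c i =>
    if h : (i : ℕ) < d then e.symm ((poly c).eval (e ⟨i, h⟩))
    else e.symm (c ⟨k - 1, by omega⟩) with hword
  have hpoly_inj : ∀ c c' : Fin k → F, poly c = poly c' → c = c' := by
    intro c c' h
    funext j
    have := congrArg (fun p => Polynomial.coeff p (j : ℕ)) h
    simpa [hcoeff, j.isLt] using this
  have hword_inj : Function.Injective word := by
    intro c c' h
    apply hpoly_inj
    have hz : poly c - poly c' = 0 := by
      apply eq_zero_of_natDegree_lt_card_of_eval_eq_zero (f := fun x : F => x)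
        (poly c - poly c') Function.injective_id
      · intro x
        have hx : ((e.symm x : Fin d) : ℕ) < d := (e.symm x).isLt
        have := congrFun h (⟨(e.symm x : Fin d), by omega⟩ : Fin (d + 1))
        simp only [hword, hx, dif_pos] at this
        have h2 := e.symm.injective this
        have hxx : e ⟨(e.symm x : Fin d), hx⟩ = x := by
          convert e.apply_symm_apply x
        rw [hxx] at h2
        simp [h2]
      · rw [hcard]
        have h1 := hdeg c; have h2 := hdeg c'
        exact lt_of_le_of_lt (natDegree_sub_le _ _) (by omega)
    have := sub_eq_zero.mp hz
    exact this
  -- agreement bound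
  have hagree : ∀ c c' : Fin k → F, c ≠ c' →
      (Finset.univ.filter fun i : Fin (d+1) => word c i = word c' i).card ≤ k - 1 := by
    intro c c' hne
    set q := poly c - poly c' with hq
    have hq0 : q ≠ 0 := sub_ne_zero.mpr (fun h => hne (hpoly_inj _ _ h))
    have hqdeg : q.natDegree < k := lt_of_le_of_lt (natDegree_sub_le _ _)
      (by have := hdeg c; have := hdeg c'; omega)
    set A := Finset.univ.filter (fun i : Fin (d+1) => word c i = word c' i) with hA
    have hsplit := Finset.card_filter_add_card_filter_not
      (s := A) (p := fun i : Fin (d+1) => (i:ℕ) < d)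
    have h1 : (A.filter fun i : Fin (d+1) => (i:ℕ) < d).card ≤ q.natDegree := by
      have hmaps : ∀ i ∈ A.filter fun i : Fin (d+1) => (i:ℕ) < d,
          (if h : (i:ℕ) < d then e ⟨i, h⟩ else e ⟨0, hd0⟩) ∈ q.roots.toFinset := by
        intro i hi
        rw [Finset.mem_filter, hA, Finset.mem_filter] at hi
        obtain ⟨⟨-, hagr⟩, hlt⟩ := hi
        rw [dif_pos hlt, Multiset.mem_toFinset, mem_roots hq0]
        simp only [hword, dif_pos hlt] at hagr
        have heq := e.symm.injective hagr
        simp [IsRoot, hq, heq]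
      refine le_trans (Finset.card_le_card_of_injOn _ hmaps ?_)
        (le_trans (Multiset.toFinset_card_le _) (card_roots' q))
      intro i hi j hj hij
      rw [Finset.mem_coe, Finset.mem_filter] at hi hj
      simp only [dif_pos hi.2, dif_pos hj.2] at hij
      exact Fin.ext (congrArg Fin.val (e.injective hij) : _)
    by_cases hlead : q.coeff (k-1) = 0
    · have hdeg2 : q.natDegree ≤ k - 2 := by
        by_contra hcon
        have hdq : q.natDegree = k - 1 := by omega
        have hld : q.leadingCoeff ≠ 0 := leadingCoeff_ne_zero.mpr hq0
        rw [leadingCoeff, hdq] at hld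
        exact hld hlead
      have h2 : (A.filter fun i : Fin (d+1) => ¬ (i:ℕ) < d).card ≤ 1 := by
        apply Finset.card_le_one.mpr
        intro i hi j hj
        rw [Finset.mem_filter] at hi hj
        have := i.isLt; have := j.isLt
        have hi2 := hi.2; have hj2 := hj.2
        exact Fin.ext (by omega)
      omega
    · have h2 : (A.filter fun i : Fin (d+1) => ¬ (i:ℕ) < d).card = 0 := by
        rw [Finset.card_eq_zero, Finset.filter_eq_empty_iff]
        intro i hi hge
        rw [hA, Finset.mem_filter] at hi
        have hagr := hi.2
        simp only [hword, dif_neg hge] at hagr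
        have heq := e.symm.injective hagr
        apply hlead
        rw [hq, coeff_sub, hcoeff, hcoeff, dif_pos (by omega : k-1 < k)]
        rw [heq, dif_pos (by omega : k - 1 < k), sub_self]
      omega
  have hdist : ∀ c c' : Fin k → F, c ≠ c' →
      d + 2 - k ≤ hammingDist (word c) (word c') := by
    intro c c' hne
    have hle := hagree c c' hne
    have hsplit := Finset.card_filter_add_card_filter_not
      (s := (Finset.univ : Finset (Fin (d+1)))) (p := fun i => word c i = word c' i)
    rw [Finset.card_univ, Fintype.card_fin] at hsplit
    have hh : hammingDist (word c) (word c')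
        = (Finset.univ.filter fun i => ¬ word c i = word c' i).card := by
      unfold hammingDist
      congr 1
    omega
  -- extremal pair: q₀ = ∏ (X - eⱼ), j < k-1
  have hk1d : k - 1 ≤ d := by omega
  set q₀ : F[X] := ∏ j : Fin (k-1), (X - Polynomial.C (e (Fin.castLE hk1d j))) with hq₀
  have hq₀monic : q₀.Monic := monic_prod_of_monic _ _ (fun j _ => monic_X_sub_C _)
  have hq₀deg : q₀.natDegree = k - 1 := by
    rw [hq₀, natDegree_prod _ _ (fun j _ => X_sub_C_ne_zero _)]
    simp [natDegree_X_sub_C]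
  set c₀ : Fin k → F := fun j => q₀.coeff j with hc₀
  have hpc₀ : poly c₀ = q₀ := by
    apply Polynomial.ext
    intro m
    rw [hcoeff]
    split
    · rfl
    · next h => exact (coeff_eq_zero_of_natDegree_lt (by omega)).symm
  have hc₀top : c₀ ⟨k-1, by omega⟩ = 1 := by
    have h1 := hq₀monic.coeff_natDegree
    rw [hq₀deg] at h1
    rw [hc₀]
    exact h1
  have hpoly0 : poly (0 : Fin k → F) = 0 := by simp [hpoly]
  have hc₀ne : c₀ ≠ 0 := by
    intro h
    rw [h] at hc₀top
    exact one_ne_zero hc₀top.symm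
  have hq₀eval : ∀ (i : Fin (d+1)) (h : (i:ℕ) < d), (q₀.eval (e ⟨i, h⟩) = 0 ↔ (i:ℕ) < k - 1) := by
    intro i h
    rw [hq₀, eval_prod, Finset.prod_eq_zero_iff]
    constructor
    · rintro ⟨j, -, hj⟩
      rw [eval_sub, eval_X, eval_C, sub_eq_zero] at hj
      have hji := congrArg Fin.val (e.injective hj)
      have := j.isLt
      simp only [Fin.coe_castLE] at hji
      omega
    · intro hik
      refine ⟨⟨i, hik⟩, Finset.mem_univ _, ?_⟩
      rw [eval_sub, eval_X, eval_C, sub_eq_zero]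
      congr 1
  have hdistexact : hammingDist (word c₀) (word 0) = d + 2 - k := by
    have hfeq : (Finset.univ.filter fun i : Fin (d+1) => ¬ word c₀ i = word 0 i)
        = Finset.univ.filter (fun i : Fin (d+1) => ¬ (i:ℕ) < k - 1) := by
      apply Finset.filter_congr
      intro i _
      by_cases h : (i:ℕ) < d
      · have heqiff : word c₀ i = word 0 i ↔ (i:ℕ) < k - 1 := by
          simp only [hword, dif_pos h, hpc₀, hpoly0, eval_zero, Pi.zero_apply,
            EmbeddingLike.apply_eq_iff_eq]
          exact hq₀eval i h
        rw [heqiff]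
      · have hne1 : ¬ word c₀ i = word 0 i := by
          simp only [hword, dif_neg h, hc₀top, Pi.zero_apply]
          intro hcon
          exact one_ne_zero (e.symm.injective hcon)
        have := i.isLt
        exact iff_of_true hne1 (by omega)
    have hcardlt : (Finset.univ.filter fun i : Fin (d+1) => (i:ℕ) < k - 1).card = k - 1 := by
      have himg : (Finset.univ.filter fun i : Fin (d+1) => (i:ℕ) < k - 1)
          = Finset.univ.image (Fin.castLE (by omega : k - 1 ≤ d + 1)) := by
        ext i
        simp only [Finset.mem_filter, Finset.mem_univ, true_and, Finset.mem_image]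
        constructor
        · intro hi; exact ⟨⟨i, hi⟩, Fin.ext rfl⟩
        · rintro ⟨j, -, rfl⟩; exact j.isLt
      rw [himg, Finset.card_image_of_injective _ (Fin.castLE_injective _),
        Finset.card_univ, Fintype.card_fin]
    have hsplit2 := Finset.card_filter_add_card_filter_not
      (s := (Finset.univ : Finset (Fin (d+1)))) (p := fun i : Fin (d+1) => (i:ℕ) < k - 1)
    rw [Finset.card_univ, Fintype.card_fin] at hsplit2
    have hh : hammingDist (word c₀) (word 0)
        = (Finset.univ.filter fun i => ¬ word c₀ i = word 0 i).card := by
      unfold hammingDist; congr 1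
    rw [hh, hfeq]
    omega
  refine ⟨Finset.univ.image word, ?_, ?_, ?_, ?_⟩
  · rw [Finset.card_image_of_injective _ hword_inj, Finset.card_univ, Fintype.card_fun,
      hcard, Fintype.card_fin]
  · have hexp : (d + 1) - (d + 2 - k) + 1 = k := by omega
    rw [hexp, Finset.card_image_of_injective _ hword_inj, Finset.card_univ, Fintype.card_fun,
      hcard, Fintype.card_fin]
  · intro w hw w' hw' hne
    rw [Finset.mem_image] at hw hw'
    obtain ⟨c, -, rfl⟩ := hw
    obtain ⟨c', -, rfl⟩ := hw'
    exact hdist c c' (fun h => hne (by rw [h]))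
  · exact ⟨word c₀, Finset.mem_image_of_mem _ (Finset.mem_univ _), word 0,
      Finset.mem_image_of_mem _ (Finset.mem_univ _),
      fun h => hc₀ne (hword_inj h), hdistexact⟩

/-- If `d ≥ 3` is a prime power, there is an MDS code over `Fin d` of wordlength
`d + 1`, combinatorial dimension `⌊(d+1)/2⌋` (so `|C| = d ^ ⌊(d+1)/2⌋`) and minimum
distance `⌈(d+1)/2⌉ + 1`. -/
theorem mds_prime_power (d : ℕ) (hd : 3 ≤ d) (hp : IsPrimePow d) :
    ∃ C : Finset (Fin (d + 1) → Fin d),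
      C.card = d ^ ((d + 1) / 2) ∧ IsMDSCode d (d + 1) ((d + 2) / 2 + 1) C := by
  obtain ⟨p, n, hpp, hn, hdpn⟩ := hp
  haveI : Fact p.Prime := ⟨hpp.nat_prime⟩
  haveI : Fintype (GaloisField p n) := Fintype.ofFinite _
  have hcard : Fintype.card (GaloisField p n) = d := by
    rw [← Nat.card_eq_fintype_card]
    exact (GaloisField.card p n (by omega)).trans hdpn
  obtain ⟨C, h1, h2, h3, h4⟩ := aux_mds (F := GaloisField p n) d ((d + 1) / 2)
    hcard (by omega) (by omega)
  have hδ : d + 2 - (d + 1) / 2 = (d + 2) / 2 + 1 := by omega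
  exact ⟨C, h1, by rw [← hδ]; exact h2, by rw [← hδ]; exact h3, by rw [← hδ]; exact h4⟩


end AMEPaper
end
end

section
/- An AME(6,4) state of minimal support exists, and for every integer n ≥ 7 no AME(n,4) state of minimal support exists; that is, N(4) = 6, where N(4) is the largest n for which an AME(n,4) state of minimal support exists. -/
open scoped BigOperators Classical

noncomputable section

namespace AMEPaper

-- auxiliary development
/- ## The hexacode-like MDS code -/

def add4 : Fin 4 → Fin 4 → Fin 4 := ![![0,1,2,3],![1,0,3,2],![2,3,0,1],![3,2,1,0]]
def mw : Fin 4 → Fin 4 := ![0,2,3,1]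
def mw2 : Fin 4 → Fin 4 := ![0,3,1,2]

def E (a b c : Fin 4) : Fin 6 → Fin 4 :=
  ![a, b, c, add4 a (add4 b c), add4 a (add4 (mw b) (mw2 c)), add4 a (add4 (mw2 b) (mw c))]

def e (p : Fin 3 → Fin 4) : Fin 6 → Fin 4 := E (p 0) (p 1) (p 2)

set_option maxRecDepth 100000 in
set_option maxHeartbeats 1000000 in
theorem dist_E : ∀ a b c a' b' c' : Fin 4, ¬(a = a' ∧ b = b' ∧ c = c') →
    ((Finset.univ : Finset (Fin 6)).filter fun i => E a b c i = E a' b' c' i).card ≤ 2 := by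
  decide

theorem dist_e (p q : Fin 3 → Fin 4) (hpq : p ≠ q) :
    ((Finset.univ : Finset (Fin 6)).filter fun i => e p i = e q i).card ≤ 2 := by
  refine dist_E (p 0) (p 1) (p 2) (q 0) (q 1) (q 2) ?_
  rintro ⟨h0, h1, h2⟩
  exact hpq (funext fun j => match j with | 0 => h0 | 1 => h1 | 2 => h2)

def tri (x : Fin 6 → Fin 4) : Fin 3 → Fin 4 := fun j => x (Fin.castLE (by norm_num) j)

theorem tri_e (p : Fin 3 → Fin 4) : tri (e p) = p := by
  funext j
  exact match j with | 0 => rfl | 1 => rfl | 2 => rfl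

theorem e_injective : Function.Injective e := by
  intro p q h
  rw [← tri_e p, ← tri_e q, h]

def C : Finset (Fin 6 → Fin 4) := Finset.univ.image e

theorem mem_C_iff (x : Fin 6 → Fin 4) : x ∈ C ↔ e (tri x) = x := by
  constructor
  · rintro hx
    rcases Finset.mem_image.1 hx with ⟨p, -, rfl⟩
    rw [tri_e]
  · intro h
    rw [← h]; exact Finset.mem_image_of_mem e (Finset.mem_univ _)

theorem card_C : C.card = 64 := by
  rw [C, Finset.card_image_of_injective _ e_injective, Finset.card_univ]
  simp [Fintype.card_fun]

theorem dist_C {x y : Fin 6 → Fin 4} (hx : x ∈ C) (hy : y ∈ C) (hxy : x ≠ y) :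
    ((Finset.univ : Finset (Fin 6)).filter fun i => x i = y i).card ≤ 2 := by
  rcases Finset.mem_image.1 hx with ⟨p, -, rfl⟩
  rcases Finset.mem_image.1 hy with ⟨q, -, rfl⟩
  exact dist_e p q (fun h => hxy (by rw [h]))

/- ## counting lemma -/

theorem countN : ∀ (m : ℕ) (B : Finset (Fin 6)), B.card + m = 3 → ∀ t : Fin 6 → Fin 4,
    (Finset.univ.filter fun p : Fin 3 → Fin 4 => ∀ i ∈ B, e p i = t i).card = 4 ^ m := by
  intro m
  induction m with
  | zero =>
    intro B hB t
    have hB3 : B.card = 3 := by omega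
    -- the restriction map is bijective
    have hinj : Function.Injective
        (fun (p : Fin 3 → Fin 4) (i : {i : Fin 6 // i ∈ B}) => e p i.1) := by
      intro p q h
      by_contra hpq
      have hsub : B ⊆ Finset.univ.filter fun i => e p i = e q i := by
        intro i hi
        simp only [Finset.mem_filter, Finset.mem_univ, true_and]
        exact congrFun h ⟨i, hi⟩
      have := Finset.card_le_card hsub
      have := dist_e p q hpq
      omega
    have hbij : Function.Bijective
        (fun (p : Fin 3 → Fin 4) (i : {i : Fin 6 // i ∈ B}) => e p i.1) := by
      rw [Fintype.bijective_iff_injective_and_card]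
      refine ⟨hinj, ?_⟩
      simp [Fintype.card_fun, Fintype.card_coe, hB3]
    obtain ⟨p₀, hp₀⟩ := hbij.2 (fun i => t i.1)
    have : (Finset.univ.filter fun p : Fin 3 → Fin 4 => ∀ i ∈ B, e p i = t i) = {p₀} := by
      rw [Finset.eq_singleton_iff_unique_mem]
      constructor
      · simp only [Finset.mem_filter, Finset.mem_univ, true_and]
        intro i hi
        exact congrFun hp₀ ⟨i, hi⟩
      · intro q hq
        simp only [Finset.mem_filter, Finset.mem_univ, true_and] at hq
        apply hinj
        funext i
        show e q i.1 = e p₀ i.1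
        rw [hq i.1 i.2]
        exact (congrFun hp₀ i).symm
    rw [this]
    simp
  | succ m ih =>
    intro B hB t
    obtain ⟨i₀, hi₀⟩ : ∃ i₀ : Fin 6, i₀ ∉ B := by
      by_contra h
      push_neg at h
      have : (Finset.univ : Finset (Fin 6)) ⊆ B := fun i _ => h i
      have := Finset.card_le_card this
      simp only [Finset.card_univ] at this
      simp only [Fintype.card_fin] at this
      omega
    rw [Finset.card_eq_sum_card_fiberwise
      (f := fun p : Fin 3 → Fin 4 => e p i₀) (t := Finset.univ) (fun _ _ => Finset.mem_univ _)]
    have hfib : ∀ v : Fin 4,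
        ((Finset.univ.filter fun p : Fin 3 → Fin 4 => ∀ i ∈ B, e p i = t i).filter
          fun p => e p i₀ = v) =
        (Finset.univ.filter fun p : Fin 3 → Fin 4 =>
          ∀ i ∈ insert i₀ B, e p i = Function.update t i₀ v i) := by
      intro v
      ext p
      simp only [Finset.filter_filter, Finset.mem_filter, Finset.mem_univ, true_and,
        Finset.mem_insert]
      constructor
      · rintro ⟨h1, h2⟩ i hi
        rcases hi with rfl | hi
        · rw [Function.update_self]; exact h2
        · rw [Function.update_of_ne (fun h : i = i₀ => hi₀ (h ▸ hi))]
          exact h1 i hi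
      · intro h
        constructor
        · intro i hi
          have := h i (Or.inr hi)
          rwa [Function.update_of_ne (fun hh : i = i₀ => hi₀ (hh ▸ hi))] at this
        · have := h i₀ (Or.inl rfl)
          rwa [Function.update_self] at this
    calc ∑ v : Fin 4, ((Finset.univ.filter fun p : Fin 3 → Fin 4 =>
            ∀ i ∈ B, e p i = t i).filter fun p => e p i₀ = v).card
        = ∑ v : Fin 4, 4 ^ m := by
          refine Finset.sum_congr rfl fun v _ => ?_
          rw [hfib v]
          exact ih (insert i₀ B) (by rw [Finset.card_insert_of_notMem hi₀]; omega) _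
      _ = 4 ^ (m + 1) := by simp [pow_succ]; ring





/- ## the state -/

def ψ₀ : (Fin 6 → Fin 4) → ℂ := fun s => if s ∈ C then (8 : ℂ)⁻¹ else 0

theorem key (x y : Fin 6 → Fin 4) :
    ψ₀ x * (starRingEnd ℂ) (ψ₀ y) = if x ∈ C ∧ y ∈ C then (64 : ℂ)⁻¹ else 0 := by
  unfold ψ₀
  by_cases hx : x ∈ C <;> by_cases hy : y ∈ C <;>
    simp [hx, hy, map_inv₀, map_ofNat]
  rw [← mul_inv]
  norm_num

theorem supp_ψ₀ : {s : Fin 6 → Fin 4 | ψ₀ s ≠ 0} = ↑C := by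
  ext s
  simp only [Set.mem_setOf_eq, Finset.coe_sort_coe, Finset.mem_coe, ψ₀]
  split
  · next h => simp only [h, iff_true]; norm_num
  · next h => simp [h]

theorem minsupp_ψ₀ : HasMinimalSupport 6 4 ψ₀ := by
  unfold HasMinimalSupport
  rw [supp_ψ₀]
  rw [Set.ncard_coe_finset, card_C]
  norm_num

theorem norm_ψ₀ : ∑ s : Fin 6 → Fin 4, ‖ψ₀ s‖ ^ 2 = 1 := by
  have h : ∀ s : Fin 6 → Fin 4, ‖ψ₀ s‖ ^ 2 = if s ∈ C then (64 : ℝ)⁻¹ else 0 := by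
    intro s
    unfold ψ₀
    split <;> norm_num
  rw [Finset.sum_congr rfl (fun s _ => h s), ← Finset.sum_filter, Finset.sum_const]
  have : Finset.univ.filter (fun s : Fin 6 → Fin 4 => s ∈ C) = C := by
    ext x; simp
  rw [this, card_C]
  norm_num





theorem card_fiber (B : Finset (Fin 6)) (b : {i : Fin 6 // i ∈ B} → Fin 4) :
    (Finset.univ.filter fun a : {i : Fin 6 // i ∉ B} → Fin 4 => combine B a b ∈ C).card =
    (Finset.univ.filter fun p : Fin 3 → Fin 4 =>
      ∀ i ∈ B, e p i = (fun i' : Fin 6 => if h : i' ∈ B then b ⟨i', h⟩ else 0) i).card := by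
  set tb : Fin 6 → Fin 4 := fun i' => if h : i' ∈ B then b ⟨i', h⟩ else 0 with htb
  apply Finset.card_bij' (fun a _ => tri (combine B a b))
    (fun p _ => fun i : {i : Fin 6 // i ∉ B} => e p i.1)
  · intro a ha
    simp only [Finset.mem_filter, Finset.mem_univ, true_and] at ha ⊢
    have hC := (mem_C_iff _).1 ha
    intro i hi
    rw [hC]
    simp only [htb, combine, dif_pos hi]
  · intro p hp
    simp only [Finset.mem_filter, Finset.mem_univ, true_and] at hp ⊢
    have : combine B (fun i : {i : Fin 6 // i ∉ B} => e p i.1) b = e p := by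
      funext i
      unfold combine
      split
      · next h =>
        have := hp i h
        simp only [htb, dif_pos h] at this
        exact this.symm
      · rfl
    rw [this]
    exact Finset.mem_image_of_mem e (Finset.mem_univ _)
  · intro a ha
    simp only [Finset.mem_filter, Finset.mem_univ, true_and] at ha
    have hC := (mem_C_iff _).1 ha
    funext i
    show e (tri (combine B a b)) i.1 = a i
    rw [hC]
    simp only [combine, dif_neg i.2]
  · intro p hp
    simp only [Finset.mem_filter, Finset.mem_univ, true_and] at hp
    have : combine B (fun i : {i : Fin 6 // i ∉ B} => e p i.1) b = e p := by
      funext i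
      unfold combine
      split
      · next h =>
        have := hp i h
        simp only [htb, dif_pos h] at this
        exact this.symm
      · rfl
    rw [this, tri_e]

theorem isAME_ψ₀ : IsAME 6 4 ψ₀ := by
  constructor
  · exact norm_ψ₀
  · intro B hB b b'
    have hB3 : B.card ≤ 3 := by norm_num at hB; exact hB
    by_cases hbb : b = b'
    · subst hbb
      rw [if_pos rfl]
      have h1 : ∀ a : {i : Fin 6 // i ∉ B} → Fin 4,
          ψ₀ (combine B a b) * (starRingEnd ℂ) (ψ₀ (combine B a b)) =
          if combine B a b ∈ C then (64 : ℂ)⁻¹ else 0 := by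
        intro a
        rw [key]
        simp
      rw [Finset.sum_congr rfl (fun a _ => h1 a), ← Finset.sum_filter, Finset.sum_const,
        card_fiber, countN (3 - B.card) B (by omega), nsmul_eq_mul]
      push_cast
      rw [pow_sub₀ (4 : ℂ) (by norm_num) hB3]
      have h4 : ((4 : ℂ) ^ B.card) ≠ 0 := pow_ne_zero _ (by norm_num)
      field_simp
      ring
    · rw [if_neg hbb]
      apply Finset.sum_eq_zero
      intro a _
      rw [key, if_neg]
      rintro ⟨h1, h2⟩
      set x := combine B a b
      set y := combine B a b'
      have hxy : x ≠ y := by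
        intro h
        apply hbb
        funext i
        calc b i = x i.1 := by simp only [x, combine, dif_pos i.2]
          _ = y i.1 := by rw [h]
          _ = b' i := by simp only [y, combine, dif_pos i.2]
      have hsub : Bᶜ ⊆ Finset.univ.filter fun i => x i = y i := by
        intro i hi
        rw [Finset.mem_compl] at hi
        simp only [Finset.mem_filter, Finset.mem_univ, true_and]
        simp only [x, y, combine, dif_neg hi]
      have hcard := Finset.card_le_card hsub
      have hcompl : Bᶜ.card = 6 - B.card := by
        rw [Finset.card_compl]
        simp
      have := dist_C h1 h2 hxy
      omega

theorem existence : ∃ ψ : (Fin 6 → Fin 4) → ℂ, IsAME 6 4 ψ ∧ HasMinimalSupport 6 4 ψ :=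
  ⟨ψ₀, isAME_ψ₀, minsupp_ψ₀⟩


/-- The combinatorial core: no "MDS-like" code for `n ≥ 7`, `q = 4`. -/
theorem core {n : ℕ} (hn : 7 ≤ n) (C : Set (Fin n → Fin 4))
    (hinj : ∀ B : Finset (Fin n), B.card = n / 2 →
      ∀ s ∈ C, ∀ t ∈ C, (∀ i ∈ B, s i = t i) → s = t)
    (hsurj : ∀ g : Fin n → Fin 4, ∃ s ∈ C, ∀ i : Fin n, i.val < n / 2 → s i = g i) :
    False := by
  set k := n / 2 with hk
  have hk3 : 3 ≤ k := by omega
  have hkn : k < n := by omega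
  have hnk : 4 ≤ n - k := by omega
  set c0 : Fin n := ⟨0, by omega⟩ with hc0
  set c1 : Fin n := ⟨1, by omega⟩ with hc1
  have hc01 : c0 ≠ c1 := by simp [hc0, hc1, Fin.ext_iff]
  have hc0v : c0.val = 0 := rfl
  have hc1v : c1.val = 1 := rfl
  -- the base index set
  set B₀ : Finset (Fin n) := (Finset.range k).attachFin
    (fun m hm => lt_of_lt_of_le (Finset.mem_range.1 hm) (le_of_lt hkn)) with hB₀
  have memB₀ : ∀ i : Fin n, i ∈ B₀ ↔ i.val < k := by
    intro i; rw [hB₀, Finset.mem_attachFin, Finset.mem_range]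
  have cardB₀ : B₀.card = k := by rw [hB₀, Finset.card_attachFin, Finset.card_range]
  have hc0B : c0 ∈ B₀ := (memB₀ c0).2 (by rw [hc0v]; omega)
  have hc1B : c1 ∈ B₀ := (memB₀ c1).2 (by rw [hc1v]; omega)
  -- the words u and W v
  obtain ⟨u, huC, hu⟩ := hsurj (fun i => if i = c0 then 1 else 0)
  have hW : ∀ v : Fin 4, ∃ s ∈ C, ∀ i : Fin n, i.val < k → s i = if i = c1 then v else 0 :=
    fun v => hsurj (fun i => if i = c1 then v else 0)
  set W : Fin 4 → (Fin n → Fin 4) := fun v => (hW v).choose with hWdef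
  have hWC : ∀ v, W v ∈ C := fun v => (hW v).choose_spec.1
  have hWval : ∀ v, ∀ i : Fin n, i.val < k → W v i = if i = c1 then v else 0 :=
    fun v => (hW v).choose_spec.2
  have hWc1 : ∀ v, W v c1 = v := by
    intro v; rw [hWval v c1 (by rw [hc1v]; omega), if_pos rfl]
  have hWzero : ∀ v, ∀ i : Fin n, i.val < k → i ≠ c1 → W v i = 0 := by
    intro v i hi hic; rw [hWval v i hi, if_neg hic]
  have huc0 : u c0 = 1 := by rw [hu c0 (by rw [hc0v]; omega), if_pos rfl]
  have huzero : ∀ i : Fin n, i.val < k → i ≠ c0 → u i = 0 := by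
    intro i hi hic; rw [hu i hi, if_neg hic]
  -- step 1 : injectivity in each outside coordinate
  have step1 : ∀ m : Fin n, k ≤ m.val → Function.Injective (fun v : Fin 4 => W v m) := by
    intro m hm v v' hvv
    have hBm : (insert m (B₀.erase c1)).card = k := by
      rw [Finset.card_insert_of_notMem, Finset.card_erase_of_mem hc1B, cardB₀]
      · omega
      · intro hmem
        have := ((memB₀ m).1 (Finset.mem_of_mem_erase hmem))
        omega
    have := hinj _ hBm (W v) (hWC v) (W v') (hWC v') ?_
    · rw [← hWc1 v, ← hWc1 v', this]
    · intro i hi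
      rcases Finset.mem_insert.1 hi with rfl | hi
      · exact hvv
      · have hiB := (memB₀ i).1 (Finset.mem_of_mem_erase hi)
        have hic1 := Finset.ne_of_mem_erase hi
        rw [hWzero v i hiB hic1, hWzero v' i hiB hic1]
  -- step 2 : matching value exists and is nonzero
  have step2 : ∀ m : Fin n, k ≤ m.val → ∃ v : Fin 4, v ≠ 0 ∧ W v m = u m := by
    intro m hm
    obtain ⟨v, hv⟩ := Finite.injective_iff_surjective.1 (step1 m hm) (u m)
    refine ⟨v, ?_, hv⟩
    rintro rfl
    -- then u = W 0, contradiction with u c0 = 1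
    have hBm : (insert m (B₀.erase c0)).card = k := by
      rw [Finset.card_insert_of_notMem, Finset.card_erase_of_mem hc0B, cardB₀]
      · omega
      · intro hmem
        have := ((memB₀ m).1 (Finset.mem_of_mem_erase hmem))
        omega
    have heq := hinj _ hBm u huC (W 0) (hWC 0) ?_
    · have : (1 : Fin 4) = 0 := by
        rw [← huc0, heq, hWval 0 c0 (by rw [hc0v]; omega), if_neg hc01]
      exact absurd this (by decide)
    · intro i hi
      rcases Finset.mem_insert.1 hi with rfl | hi
      · exact hv.symm
      · have hiB := (memB₀ i).1 (Finset.mem_of_mem_erase hi)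
        have hic0 := Finset.ne_of_mem_erase hi
        rw [huzero i hiB hic0, hWval 0 i hiB]
        split <;> rfl
  -- step 3 : pigeonhole over outside coordinates
  set f : Fin n → Fin 4 := fun m => if h : k ≤ m.val then (step2 m h).choose else 0 with hf
  have hfspec : ∀ m : Fin n, k ≤ m.val → f m ≠ 0 ∧ W (f m) m = u m := by
    intro m hm
    rw [hf]; simp only [dif_pos hm]
    exact (step2 m hm).choose_spec
  have hmaps : ∀ m ∈ B₀ᶜ, f m ∈ (Finset.univ : Finset (Fin 4)).erase 0 := by
    intro m hm
    have hm' : k ≤ m.val := by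
      have := Finset.mem_compl.1 hm
      rw [memB₀] at this; omega
    exact Finset.mem_erase.2 ⟨(hfspec m hm').1, Finset.mem_univ _⟩
  have hcards : ((Finset.univ : Finset (Fin 4)).erase 0).card < B₀ᶜ.card := by
    rw [Finset.card_erase_of_mem (Finset.mem_univ _), Finset.card_compl, cardB₀]
    simp only [Finset.card_univ, Fintype.card_fin]
    omega
  obtain ⟨m, hm, m', hm', hne, hfeq⟩ :=
    Finset.exists_ne_map_eq_of_card_lt_of_maps_to hcards hmaps
  have hmk : k ≤ m.val := by have := Finset.mem_compl.1 hm; rw [memB₀] at this; omega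
  have hmk' : k ≤ m'.val := by have := Finset.mem_compl.1 hm'; rw [memB₀] at this; omega
  set v := f m with hv
  have hv0 : v ≠ 0 := (hfspec m hmk).1
  have hvm : W v m = u m := (hfspec m hmk).2
  have hvm' : W v m' = u m' := by
    rw [hfeq]; exact (hfspec m' hmk').2
  -- final contradiction
  have hc1B' : c1 ∈ B₀.erase c0 := Finset.mem_erase.2 ⟨hc01.symm, hc1B⟩
  have hm'B : m' ∉ (B₀.erase c0).erase c1 := by
    intro h
    have := (memB₀ m').1 (Finset.mem_of_mem_erase (Finset.mem_of_mem_erase h))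
    omega
  have hmB : m ∉ insert m' ((B₀.erase c0).erase c1) := by
    intro h
    rcases Finset.mem_insert.1 h with rfl | h
    · exact hne rfl
    · have := (memB₀ m).1 (Finset.mem_of_mem_erase (Finset.mem_of_mem_erase h))
      omega
  have hB' : (insert m (insert m' ((B₀.erase c0).erase c1))).card = k := by
    rw [Finset.card_insert_of_notMem hmB, Finset.card_insert_of_notMem hm'B,
      Finset.card_erase_of_mem hc1B', Finset.card_erase_of_mem hc0B, cardB₀]
    omega
  have heq := hinj _ hB' u huC (W v) (hWC v) ?_
  · have : (1 : Fin 4) = 0 := by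
      rw [← huc0, heq, hWval v c0 (by rw [hc0v]; omega), if_neg hc01]
    exact absurd this (by decide)
  · intro i hi
    rcases Finset.mem_insert.1 hi with rfl | hi
    · exact hvm.symm
    rcases Finset.mem_insert.1 hi with rfl | hi
    · exact hvm'.symm
    · have hic1 := Finset.ne_of_mem_erase hi
      have hi' := Finset.mem_of_mem_erase hi
      have hic0 := Finset.ne_of_mem_erase hi'
      have hiB := (memB₀ i).1 (Finset.mem_of_mem_erase hi')
      rw [huzero i hiB hic0, hWzero v i hiB hic1]





theorem surj_aux {n : ℕ} {ψ : (Fin n → Fin 4) → ℂ} (hA : IsAME n 4 ψ)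
    (B : Finset (Fin n)) (hB : B.card ≤ n / 2) (b : {i : Fin n // i ∈ B} → Fin 4) :
    ∃ a : {i : Fin n // i ∉ B} → Fin 4, ψ (combine B a b) ≠ 0 := by
  have h := hA.2 B hB b b
  rw [if_pos rfl] at h
  have hne : (∑ a : {i : Fin n // i ∉ B} → Fin 4,
      ψ (combine B a b) * (starRingEnd ℂ) (ψ (combine B a b))) ≠ 0 := by
    rw [h]
    apply inv_ne_zero
    apply pow_ne_zero
    norm_num
  obtain ⟨a, -, ha⟩ := Finset.exists_ne_zero_of_sum_ne_zero hne
  refine ⟨a, fun h0 => ha ?_⟩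
  rw [h0, zero_mul]

theorem nonexistence {n : ℕ} (hn : 7 ≤ n) :
    ¬ ∃ ψ : (Fin n → Fin 4) → ℂ, IsAME n 4 ψ ∧ HasMinimalSupport n 4 ψ := by
  rintro ⟨ψ, hA, hM⟩
  set Cs : Set (Fin n → Fin 4) := {s | ψ s ≠ 0} with hCs
  set F : Finset (Fin n → Fin 4) := Finset.univ.filter (fun s => ψ s ≠ 0) with hF
  have hFCs : ∀ s, s ∈ F ↔ s ∈ Cs := by
    intro s; rw [hF, Finset.mem_filter]; simp [hCs]
  have hFcard : F.card = 4 ^ (n / 2) := by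
    have := hM
    unfold HasMinimalSupport at this
    rw [Set.ncard_eq_toFinset_card', Set.toFinset_setOf] at this
    exact this
  refine core hn Cs ?_ ?_
  · -- injectivity on every (n/2)-subset
    intro B hB s hs t ht hst
    set r : (Fin n → Fin 4) → ({i : Fin n // i ∈ B} → Fin 4) :=
      fun s => fun i => s i.1 with hr
    have hsurjB : ∀ b : {i : Fin n // i ∈ B} → Fin 4, ∃ x ∈ F, r x = b := by
      intro b
      obtain ⟨a, ha⟩ := surj_aux hA B (le_of_eq hB) b
      refine ⟨combine B a b, (hFCs _).2 ha, ?_⟩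
      funext i
      simp [hr, combine, dif_pos i.2]
    have himage : F.image r = Finset.univ := by
      apply Finset.eq_univ_of_forall
      intro b
      obtain ⟨x, hx, hrx⟩ := hsurjB b
      exact Finset.mem_image.2 ⟨x, hx, hrx⟩
    have hcard : (F.image r).card = F.card := by
      rw [himage, Finset.card_univ, hFcard, Fintype.card_fun]
      simp [Fintype.card_coe, hB]
    have hinjOn := Finset.card_image_iff.1 hcard
    have : r s = r t := by
      funext i
      exact hst i.1 i.2
    exact hinjOn ((hFCs s).2 hs) ((hFCs t).2 ht) this
  · -- surjectivity on the first n/2 coordinates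
    intro g
    set B₀ : Finset (Fin n) := (Finset.range (n / 2)).attachFin
      (fun m hm => lt_of_lt_of_le (Finset.mem_range.1 hm) (by omega)) with hB₀
    have memB₀ : ∀ i : Fin n, i ∈ B₀ ↔ i.val < n / 2 := by
      intro i; rw [hB₀, Finset.mem_attachFin, Finset.mem_range]
    have cardB₀ : B₀.card = n / 2 := by rw [hB₀, Finset.card_attachFin, Finset.card_range]
    obtain ⟨a, ha⟩ := surj_aux hA B₀ (le_of_eq cardB₀) (fun i => g i.1)
    refine ⟨combine B₀ a (fun i => g i.1), ha, ?_⟩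
    intro i hi
    have hiB : i ∈ B₀ := (memB₀ i).2 hi
    simp [combine, dif_pos hiB]



/-- `𝒩(4) = 6`: a minimally supported `AME(6,4)` state exists, and no minimally
supported `AME(n,4)` state exists for `n ≥ 7`. -/
theorem N_four_eq_six :
    (∃ ψ : (Fin 6 → Fin 4) → ℂ, IsAME 6 4 ψ ∧ HasMinimalSupport 6 4 ψ) ∧
    (∀ n : ℕ, 7 ≤ n →
      ¬ ∃ ψ : (Fin n → Fin 4) → ℂ, IsAME n 4 ψ ∧ HasMinimalSupport n 4 ψ) := by

    refine ⟨⟨ψ₀, isAME_ψ₀, minsupp_ψ₀⟩, fun n hn => nonexistence hn⟩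


end AMEPaper
end
end

section
/- Suppose that there is no MDS code over the alphabet Fin 10 of wordlength 12 and combinatorial dimension 8 (i.e., M(8,10) ≤ 11). Then there is no AME(16,10) state of minimal support; in particular, N(10) ≤ 15, where N(10) is the largest n for which an AME(n,10) state of minimal support exists. -/
open scoped BigOperators Classical

noncomputable section

namespace AMEPaper

lemma key_s17 (n : ℕ) (hn : 16 ≤ n) (ψ : (Fin n → Fin 10) → ℂ)
    (hA : IsAME n 10 ψ) (hms : HasMinimalSupport n 10 ψ) :
    ∃ C : Finset (Fin 12 → Fin 10), IsMDSCode 10 12 5 C := by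
  set m := n / 2 with hmdef
  have hm8 : 8 ≤ m := by omega
  have hmn : m + 4 ≤ n := by omega
  set S : Finset (Fin n → Fin 10) := Finset.univ.filter (fun s => ψ s ≠ 0) with hSdef
  have hScard : S.card = 10 ^ m := by
    have : ((S : Set (Fin n → Fin 10))) = {s | ψ s ≠ 0} := by ext s; simp [hSdef]
    rw [← hms, ← this, Set.ncard_coe_finset]
  -- A1 : nonempty fibers
  have A1 : ∀ B : Finset (Fin n), B.card ≤ m →
      ∀ b : {i : Fin n // i ∈ B} → Fin 10, ∃ a, ψ (combine B a b) ≠ 0 := by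
    intro B hB b
    by_contra h
    push_neg at h
    have := (hA.2 B hB b b)
    rw [if_pos rfl] at this
    simp only [h, zero_mul, Finset.sum_const_zero] at this
    have h10 : ((10 : ℂ) ^ B.card)⁻¹ ≠ 0 := by
      apply inv_ne_zero; exact pow_ne_zero _ (by norm_num)
    exact h10 this.symm
  -- restriction to any m-set is injective and surjective on S
  have main : ∀ B : Finset (Fin n), B.card = m →
      (∀ w ∈ S, ∀ w' ∈ S, (∀ i ∈ B, w i = w' i) → w = w') ∧
      (∀ b : {i : Fin n // i ∈ B} → Fin 10, ∃ w ∈ S, ∀ i (h : i ∈ B), w i = b ⟨i, h⟩) := by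
    intro B hB
    set f : {x // x ∈ S} → ({i : Fin n // i ∈ B} → Fin 10) := fun x i => x.1 i.1 with hfdef
    have hsurj : Function.Surjective f := by
      intro b
      obtain ⟨a, ha⟩ := A1 B (le_of_eq hB) b
      have hmem : combine B a b ∈ S := by simp [hSdef, ha]
      refine ⟨⟨_, hmem⟩, ?_⟩
      funext i
      simp [hfdef, combine, i.2]
    have hbij : Function.Bijective f := by
      rw [Fintype.bijective_iff_surjective_and_card]
      refine ⟨hsurj, ?_⟩
      simp [Fintype.card_coe, hScard, hB]
    constructor
    · intro w hw w' hw' hag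
      have : f ⟨w, hw⟩ = f ⟨w', hw'⟩ := by
        funext i; exact hag i.1 i.2
      have := hbij.1 this
      exact congrArg Subtype.val this
    · intro b
      obtain ⟨x, hx⟩ := hsurj b
      exact ⟨x.1, x.2, fun i h => congrFun hx ⟨i, h⟩⟩
  -- embedding of Fin 12 into Fin n
  set e : Fin 12 → Fin n := fun i => ⟨i.1, by omega⟩ with hedef
  have he : Function.Injective e := by
    intro i j hij
    have h2 := congrArg Fin.val hij
    exact Fin.ext h2
  -- padding set F
  set F : Finset (Fin n) := (Finset.Ico 12 (m + 4)).attachFin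
    (fun j hj => by rw [Finset.mem_Ico] at hj; omega) with hFdef
  have hFmem : ∀ j : Fin n, j ∈ F ↔ 12 ≤ j.1 ∧ j.1 < m + 4 := by
    intro j; simp [hFdef, Finset.mem_attachFin, Finset.mem_Ico]
  have hFcard : F.card = m - 8 := by
    rw [hFdef, Finset.card_attachFin, Nat.card_Ico]; omega
  -- the big sets
  have hBT : ∀ T : Finset (Fin 12), T.card = 8 → (T.image e ∪ F).card = m := by
    intro T hT
    have hdisj : Disjoint (T.image e) F := by
      rw [Finset.disjoint_left]
      intro x hx hxF
      rw [Finset.mem_image] at hx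
      obtain ⟨t, _, rfl⟩ := hx
      have := (hFmem _).1 hxF
      simp [hedef] at this
      omega
    rw [Finset.card_union_of_disjoint hdisj, Finset.card_image_of_injective _ he,
      hT, hFcard]
    omega
  set D : Finset (Fin n → Fin 10) := S.filter (fun w => ∀ j ∈ F, w j = 0) with hDdef
  set C : Finset (Fin 12 → Fin 10) := D.image (fun w => w ∘ e) with hCdef
  -- agreement on any 8-set of Fin 12 forces equality in C
  have Lagree : ∀ u ∈ C, ∀ u' ∈ C, ∀ T : Finset (Fin 12), T.card = 8 →
      (∀ i ∈ T, u i = u' i) → u = u' := by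
    intro u hu u' hu' T hT hag
    rw [hCdef, Finset.mem_image] at hu hu'
    obtain ⟨w, hw, rfl⟩ := hu
    obtain ⟨w', hw', rfl⟩ := hu'
    rw [hDdef, Finset.mem_filter] at hw hw'
    have := (main (T.image e ∪ F) (hBT T hT)).1 w hw.1 w' hw'.1 ?_
    · rw [this]
    intro i hi
    rw [Finset.mem_union] at hi
    rcases hi with hi | hi
    · rw [Finset.mem_image] at hi
      obtain ⟨t, ht, rfl⟩ := hi
      exact hag t ht
    · rw [hw.2 i hi, hw'.2 i hi]
  -- cardinality of C
  have T8card : (Finset.univ.filter (fun i : Fin 12 => i.1 < 8)).card = 8 := by decide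
  have hCcard : C.card = 10 ^ 8 := by
    have : C.card = (Finset.univ : Finset (Fin 8 → Fin 10)).card := by
      apply Finset.card_bij (fun u _ => fun t : Fin 8 => u ⟨t.1, by omega⟩)
      · intro u hu; exact Finset.mem_univ _
      · intro u hu u' hu' heq
        apply Lagree u hu u' hu' _ T8card
        intro i hi
        rw [Finset.mem_filter] at hi
        have := congrFun heq ⟨i.1, hi.2⟩
        simpa using this
      · intro b _
        set T8 := Finset.univ.filter (fun i : Fin 12 => i.1 < 8) with hT8
        set bB : {i : Fin n // i ∈ T8.image e ∪ F} → Fin 10 :=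
          fun i => if h : i.1.1 < 8 then b ⟨i.1.1, h⟩ else 0 with hbB
        obtain ⟨w, hwS, hw⟩ := (main (T8.image e ∪ F) (hBT T8 T8card)).2 bB
        have hwD : w ∈ D := by
          rw [hDdef, Finset.mem_filter]
          refine ⟨hwS, fun j hj => ?_⟩
          have hjmem : j ∈ T8.image e ∪ F := Finset.mem_union_right _ hj
          rw [hw j hjmem]
          have hjF := (hFmem j).1 hj
          have hj8 : ¬ ((j : ℕ) < 8) := by omega
          simp [hbB, hj8]
        refine ⟨w ∘ e, ?_, ?_⟩
        · rw [hCdef, Finset.mem_image]; exact ⟨w, hwD, rfl⟩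
        · funext t
          have hte : e ⟨t.1, by omega⟩ ∈ T8.image e ∪ F := by
            apply Finset.mem_union_left
            rw [Finset.mem_image]
            exact ⟨⟨t.1, by omega⟩, by simp [hT8, t.2], rfl⟩
          have := hw _ hte
          simp only [Function.comp_apply]
          rw [this]
          have ht8 : ((e ⟨t.1, by omega⟩ : Fin n) : ℕ) < 8 := t.2
          simp [hbB, ht8, hedef]
    rw [this]
    simp
  -- minimum distance ≥ 5
  have hdist : ∀ u ∈ C, ∀ u' ∈ C, u ≠ u' → 5 ≤ hammingDist u u' := by
    intro u hu u' hu' hne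
    by_contra h
    push_neg at h
    have hAcard : 8 ≤ (Finset.univ.filter (fun i : Fin 12 => u i = u' i)).card := by
      have hsplit := Finset.card_filter_add_card_filter_not
        (s := (Finset.univ : Finset (Fin 12))) (p := fun i => u i = u' i)
      have hd : hammingDist u u' = (Finset.univ.filter (fun i : Fin 12 => ¬ u i = u' i)).card := by
        rfl
      rw [Finset.card_univ] at hsplit
      simp only [Fintype.card_fin] at hsplit
      omega
    obtain ⟨T, hTsub, hT⟩ := Finset.exists_subset_card_eq hAcard
    exact hne (Lagree u hu u' hu' T hT (fun i hi => by
      have := hTsub hi; rw [Finset.mem_filter] at this; exact this.2))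
  -- some pair at distance exactly 5
  have hpair : ∃ u ∈ C, ∃ u' ∈ C, u ≠ u' ∧ hammingDist u u' = 5 := by
    have hlt : (Finset.univ : Finset (Fin 7 → Fin 10)).card < C.card := by
      rw [hCcard, Finset.card_univ]
      simp only [Fintype.card_fun, Fintype.card_fin]
      norm_num
    obtain ⟨u, hu, u', hu', hne, heq⟩ :=
      Finset.exists_ne_map_eq_of_card_lt_of_maps_to hlt
        (f := fun u => (fun t : Fin 7 => u ⟨t.1, by omega⟩)) (fun a _ => Finset.mem_univ _)
    refine ⟨u, hu, u', hu', hne, le_antisymm ?_ (hdist u hu u' hu' hne)⟩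
    have hsub : (Finset.univ.filter (fun i : Fin 12 => ¬ u i = u' i)) ⊆
        (Finset.univ.filter (fun i : Fin 12 => ¬ i.1 < 7)) := by
      intro i hi
      rw [Finset.mem_filter] at hi ⊢
      refine ⟨Finset.mem_univ _, fun h7 => ?_⟩
      have := congrFun heq ⟨i.1, h7⟩
      simp only at this
      apply hi.2
      have hieq : (⟨i.1, i.2⟩ : Fin 12) = i := Fin.ext rfl
      simpa [hieq] using this
    have h5 : (Finset.univ.filter (fun i : Fin 12 => ¬ i.1 < 7)).card = 5 := by decide
    have := Finset.card_le_card hsub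
    rw [h5] at this
    exact this
  exact ⟨C, by norm_num [hCcard], hdist, hpair⟩


/-- If there is no MDS code over `Fin 10` of wordlength `12` and combinatorial
dimension `8` (i.e. minimum distance `5`), then there is no minimally supported
`AME(16,10)` state; in particular `𝒩(10) ≤ 15`. -/
theorem N_ten_le_fifteen
    (hMDS : ¬ ∃ C : Finset (Fin 12 → Fin 10), IsMDSCode 10 12 5 C) :
    (¬ ∃ ψ : (Fin 16 → Fin 10) → ℂ, IsAME 16 10 ψ ∧ HasMinimalSupport 16 10 ψ) ∧
    (∀ n : ℕ, 16 ≤ n →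
      ¬ ∃ ψ : (Fin n → Fin 10) → ℂ, IsAME n 10 ψ ∧ HasMinimalSupport n 10 ψ) := by
  have H : ∀ n : ℕ, 16 ≤ n →
      ¬ ∃ ψ : (Fin n → Fin 10) → ℂ, IsAME n 10 ψ ∧ HasMinimalSupport n 10 ψ := by
    rintro n hn ⟨ψ, hA, hms⟩
    exact hMDS (key_s17 n hn ψ hA hms)
  exact ⟨H 16 le_rfl, H⟩

end AMEPaper
end
end
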